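/- arXiv:2112.00161 — 6 statements merged into one kernel-verified Lean document; each statement's English description precedes it below -/
import Mathlib

section
/- Fix 0 < r < 1 and a, b > 0. For each λ ∈ (1, 1/r) there exists a unique pair (p₋, p₊) with p₋ ∈ (r, p̄(a,b)), p₊ ∈ (p̄(a,b), 1), p₊ = λp₋, and M^{p₋}(a,b) = M^{p₊}(a,b). Moreover, if a ≠ rb then p₋ = [r(λ+1)(a−b) + √(r²(λ+1)²(a−b)² − 4rλ(ra−b)(a−rb))] / (2λ(a−rb)), while if a = rb then p₋ = (r+1)/(λ+1). -/
noncomputable section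

/-- The stationary shape function `M^p(a,b) = pa/(1−p) + rb/(p−r)`. -/
def Mfun (r p a b : ℝ) : ℝ := p * a / (1 - p) + r * b / (p - r)

/-- The minimizing parameter
`p̄(a,b) = (r(a+b) + (r+1)√(rab)) / (a + rb + 2√(rab))`. -/
def pbar (r a b : ℝ) : ℝ :=
  (r * (a + b) + (r + 1) * Real.sqrt (r * a * b)) /
    (a + r * b + 2 * Real.sqrt (r * a * b))

lemma mfun_iff (r a b p q : ℝ) (hrp : r < p) (hp1 : p < 1) (hrq : r < q) (hq1 : q < 1)
    (hpq : p < q) :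
    Mfun r p a b = Mfun r q a b ↔ a * (p - r) * (q - r) = r * b * (1 - p) * (1 - q) := by
  have h1 : (1 : ℝ) - p ≠ 0 := by linarith
  have h2 : (1 : ℝ) - q ≠ 0 := by linarith
  have h3 : p - r ≠ 0 := by linarith
  have h4 : q - r ≠ 0 := by linarith
  have hd : (1 - p) * (1 - q) * (p - r) * (q - r) ≠ 0 := by positivity
  have key : Mfun r p a b - Mfun r q a b =
      (p - q) * (a * (p - r) * (q - r) - r * b * (1 - p) * (1 - q)) /
        ((1 - p) * (1 - q) * (p - r) * (q - r)) := by
    unfold Mfun; field_simp; ring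
  constructor
  · intro h
    have h0 : (p - q) * (a * (p - r) * (q - r) - r * b * (1 - p) * (1 - q)) /
        ((1 - p) * (1 - q) * (p - r) * (q - r)) = 0 := by rw [← key]; linarith
    rw [div_eq_zero_iff] at h0
    rcases h0 with h0 | h0
    · rcases mul_eq_zero.mp h0 with h0 | h0
      · exfalso; have : p ≠ q := ne_of_lt hpq; exact this (by linarith)
      · linarith [sub_eq_zero.mp h0]
    · exact absurd h0 hd
  · intro h
    have : Mfun r p a b - Mfun r q a b = 0 := by rw [key]; rw [sub_eq_zero.mpr h]; ring
    linarith

set_option maxHeartbeats 1000000 in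
/-- **Existence, uniqueness, and formula for the pair `(p₋^λ, p₊^λ)`.**
For `0 < r < 1`, `a, b > 0`, and `λ ∈ (1, 1/r)`, there is a unique pair
`(p₋, p₊)` with `p₋ ∈ (r, p̄(a,b))`, `p₊ ∈ (p̄(a,b), 1)`, `p₊ = λ p₋`, and
`M^{p₋}(a,b) = M^{p₊}(a,b)`; moreover `p₋` is given by the explicit formula. -/
theorem exists_unique_pbar_pm (r a b : ℝ) (hr0 : 0 < r) (hr1 : r < 1)
    (ha : 0 < a) (hb : 0 < b) (lam : ℝ) (hlam : lam ∈ Set.Ioo 1 (1 / r)) :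
    (∃! pq : ℝ × ℝ,
      pq.1 ∈ Set.Ioo r (pbar r a b) ∧ pq.2 ∈ Set.Ioo (pbar r a b) 1 ∧
      pq.2 = lam * pq.1 ∧ Mfun r pq.1 a b = Mfun r pq.2 a b) ∧
    (∀ p : ℝ, p ∈ Set.Ioo r (pbar r a b) → lam * p ∈ Set.Ioo (pbar r a b) 1 →
      Mfun r p a b = Mfun r (lam * p) a b →
      p = if a = r * b then (r + 1) / (lam + 1)
          else (r * (lam + 1) * (a - b) +
              Real.sqrt (r ^ 2 * (lam + 1) ^ 2 * (a - b) ^ 2 -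
                4 * r * lam * (r * a - b) * (a - r * b))) /
            (2 * lam * (a - r * b))) := by
  obtain ⟨hlam1, hlamr⟩ := hlam
  have hlam0 : 0 < lam := by linarith
  have hlr1 : lam * r < 1 := (lt_div_iff₀ hr0).mp hlamr
  -- square root setup
  set u := Real.sqrt a with hu_def
  set v := Real.sqrt (r * b) with hv_def
  have hu : 0 < u := Real.sqrt_pos.mpr ha
  have hv : 0 < v := Real.sqrt_pos.mpr (by positivity)
  have hu2 : u ^ 2 = a := Real.sq_sqrt ha.le
  have hv2 : v ^ 2 = r * b := Real.sq_sqrt (by positivity)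
  have hs : Real.sqrt (r * a * b) = u * v := by
    rw [show r * a * b = a * (r * b) by ring, Real.sqrt_mul ha.le]
  have huv : (0:ℝ) < u + v := by linarith
  set P := pbar r a b with hP_def
  have hpbar : P = (r * u + v) / (u + v) := by
    rw [hP_def]; unfold pbar
    rw [hs, div_eq_div_iff (by nlinarith) huv.ne']
    linear_combination ((1-r)*v)*hu2 + ((r-1)*u)*hv2
  have hP1 : u * (P - r) = v * (1 - P) := by
    rw [hpbar]; field_simp; ring
  have hPr : r < P := by rw [hpbar, lt_div_iff₀ huv]; nlinarith
  have hP1' : P < 1 := by rw [hpbar, div_lt_one huv]; nlinarith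
  have hP0 : 0 < P := lt_trans hr0 hPr
  -- key identity
  have hkey : ∀ x : ℝ, a * (P - r) * (x - r) - r * b * (1 - P) * (1 - x)
      = u * v * (1 - r) * (x - P) := by
    intro x
    linear_combination (-(P-r)*(x-r))*hu2 + ((1-P)*(1-x))*hv2 +
      (u*(x-r) + v*(1-x))*hP1
  -- the shifted quadratic g
  set g : ℝ → ℝ := fun p => a * (p - r) * (lam * p - r) - r * b * (1 - p) * (1 - lam * p)
    with hg_def
  -- Formula part (second conjunct), proved first
  have formula : ∀ p : ℝ, p ∈ Set.Ioo r P → lam * p ∈ Set.Ioo P 1 →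
      Mfun r p a b = Mfun r (lam * p) a b →
      p = if a = r * b then (r + 1) / (lam + 1)
          else (r * (lam + 1) * (a - b) +
              Real.sqrt (r ^ 2 * (lam + 1) ^ 2 * (a - b) ^ 2 -
                4 * r * lam * (r * a - b) * (a - r * b))) /
            (2 * lam * (a - r * b)) := by
    intro p hp hq hM
    obtain ⟨hrp, hpP⟩ := hp
    obtain ⟨hPq, hq1⟩ := hq
    have hp1 : p < 1 := by linarith
    have hrq : r < lam * p := by linarith
    have hplt : p < lam * p := by nlinarith
    have gq : a * (p - r) * (lam * p - r) = r * b * (1 - p) * (1 - lam * p) :=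
      (mfun_iff r a b p (lam * p) hrp hp1 hrq hq1 hplt).mp hM
    by_cases hab : a = r * b
    · rw [if_pos hab]
      have h2 : r * b * (1 - r) * ((lam + 1) * p - (r + 1)) = 0 := by
        rw [hab] at gq; linear_combination gq
      have h3 : (lam + 1) * p - (r + 1) = 0 := by
        have hrb1 : r * b * (1 - r) ≠ 0 :=
          ne_of_gt (by nlinarith : (0:ℝ) < r * b * (1 - r))
        exact (mul_eq_zero.mp h2).resolve_left hrb1
      rw [eq_div_iff (by linarith : lam + 1 ≠ 0)]; linarith
    · rw [if_neg hab]
      have h2AB : 0 < 2 * (lam * (a - r * b)) * p - r * (lam + 1) * (a - b) := by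
        have e : 2 * (lam * (a - r * b)) * p - r * (lam + 1) * (a - b)
            = a * (lam * p - r) + a * (lam * (p - r)) + r * b * (1 - lam * p)
              + r * b * (lam * (1 - p)) := by ring
        rw [e]
        have t1 : 0 < a * (lam * p - r) := mul_pos ha (by linarith)
        have t2 : 0 < a * (lam * (p - r)) :=
          mul_pos ha (mul_pos hlam0 (by linarith))
        have t3 : 0 < r * b * (1 - lam * p) := mul_pos (mul_pos hr0 hb) (by linarith)
        have t4 : 0 < r * b * (lam * (1 - p)) :=
          mul_pos (mul_pos hr0 hb) (mul_pos hlam0 (by linarith))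
        linarith
      have hD : r ^ 2 * (lam + 1) ^ 2 * (a - b) ^ 2 -
          4 * r * lam * (r * a - b) * (a - r * b)
          = (2 * (lam * (a - r * b)) * p - r * (lam + 1) * (a - b)) ^ 2 := by
        linear_combination (-4 * lam * (a - r * b)) * gq
      rw [hD, Real.sqrt_sq h2AB.le]
      rw [eq_div_iff (by
        have : a - r * b ≠ 0 := sub_ne_zero.mpr hab
        positivity)]
      ring
  -- Existence
  have hgP : 0 < g P := by
    have := hkey (lam * P)
    have e : g P = u * v * (1 - r) * (lam * P - P) := by
      rw [hg_def]; simpa using this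
    rw [e]
    have h0 : 0 < lam * P - P := by nlinarith
    exact mul_pos (mul_pos (mul_pos hu hv) (by linarith)) h0
  have hgr : g r < 0 := by
    have e : g r = -(r * b * (1 - r) * (1 - lam * r)) := by rw [hg_def]; ring
    rw [e]; simp only [neg_neg, neg_lt_zero]
    exact mul_pos (mul_pos (mul_pos hr0 hb) (by linarith)) (by linarith)
  have hgPl : g (P / lam) < 0 := by
    have hlp : lam * (P / lam) = P := mul_div_cancel₀ P hlam0.ne'
    have e : g (P / lam) = u * v * (1 - r) * (P / lam - P) := by
      rw [hg_def]; simp only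
      rw [hlp]
      have := hkey (P / lam)
      linarith [this]
    rw [e]
    have h1 : P / lam - P < 0 := by
      have : P / lam < P := div_lt_self hP0 hlam1
      linarith
    have h2 : 0 < u * v * (1 - r) := mul_pos (mul_pos hu hv) (by linarith)
    nlinarith
  have hg1l : 0 < g (1 / lam) := by
    have hlp : lam * (1 / lam) = 1 := mul_one_div_cancel hlam0.ne'
    have e : g (1 / lam) = a * (1 / lam - r) * (1 - r) := by
      rw [hg_def]; simp only
      rw [hlp]; ring
    rw [e]
    have : r < 1 / lam := by rw [lt_div_iff₀ hlam0]; linarith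
    have h2 : 0 < 1 / lam - r := by linarith
    exact mul_pos (mul_pos ha h2) (by linarith)
  set L := max r (P / lam) with hL_def
  set R := min P (1 / lam) with hR_def
  have hrl : r < 1 / lam := by rw [lt_div_iff₀ hlam0]; linarith
  have hLR : L < R := by
    apply lt_min
    · apply max_lt hPr (div_lt_self hP0 hlam1)
    · apply max_lt hrl
      gcongr
  have hgL : g L < 0 := by
    rcases max_choice r (P / lam) with h | h <;> rw [hL_def, h]
    · exact hgr
    · exact hgPl
  have hgR : 0 < g R := by
    rcases min_choice P (1 / lam) with h | h <;> rw [hR_def, h]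
    · exact hgP
    · exact hg1l
  have hcont : ContinuousOn g (Set.Icc L R) := by
    apply Continuous.continuousOn
    rw [hg_def]; fun_prop
  have hmem : (0:ℝ) ∈ Set.Ioo (g L) (g R) := ⟨hgL, hgR⟩
  obtain ⟨p₀, hp₀mem, hgp₀⟩ := intermediate_value_Ioo hLR.le hcont hmem
  obtain ⟨hLp₀, hp₀R⟩ := hp₀mem
  have hrp₀ : r < p₀ := lt_of_le_of_lt (le_max_left _ _) hLp₀
  have hp₀P : p₀ < P := lt_of_lt_of_le hp₀R (min_le_left _ _)
  have hp₀l : p₀ < 1 / lam := lt_of_lt_of_le hp₀R (min_le_right _ _)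
  have hq₀1 : lam * p₀ < 1 := by
    rw [← mul_one_div_cancel hlam0.ne']
    exact (mul_lt_mul_iff_right₀ hlam0).mpr hp₀l
  have hPq₀ : P < lam * p₀ := by
    have h1 : P / lam < p₀ := lt_of_le_of_lt (le_max_right _ _) hLp₀
    calc P = lam * (P / lam) := (mul_div_cancel₀ P hlam0.ne').symm
    _ < lam * p₀ := (mul_lt_mul_iff_right₀ hlam0).mpr h1
  have hrq₀ : r < lam * p₀ := by linarith
  have hp₀1 : p₀ < 1 := by linarith
  have hplt₀ : p₀ < lam * p₀ := by nlinarith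
  have hM₀ : Mfun r p₀ a b = Mfun r (lam * p₀) a b := by
    rw [mfun_iff r a b p₀ (lam * p₀) hrp₀ hp₀1 hrq₀ hq₀1 hplt₀]
    have : g p₀ = a * (p₀ - r) * (lam * p₀ - r) - r * b * (1 - p₀) * (1 - lam * p₀) := by
      rw [hg_def]
    linarith [hgp₀, this]
  refine ⟨⟨(p₀, lam * p₀), ⟨⟨hrp₀, hp₀P⟩, ⟨hPq₀, hq₀1⟩, rfl, hM₀⟩, ?_⟩, formula⟩
  rintro ⟨p, q⟩ ⟨hp, hq, hqe, hM⟩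
  simp only at hp hq hqe hM ⊢
  subst hqe
  have e1 := formula p hp hq hM
  have e2 := formula p₀ ⟨hrp₀, hp₀P⟩ ⟨hPq₀, hq₀1⟩ hM₀
  have : p = p₀ := by rw [e1, e2]
  rw [this]


end
end

section
/- Fix 0 < r < 1. For all x₁, x₂ ≥ 0, inf_{p ∈ (r,1)} M^p(x₁, x₂) = (r/(1−r))(x₁ + x₂) + (2√r/(1−r))√(x₁x₂), where M^p(x₁,x₂) = px₁/(1−p) + rx₂/(p−r). -/
noncomputable section

/-- **Variational formula for the shape function of geometric LPP.**
For `0 < r < 1` and `x₁, x₂ ≥ 0`,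
`inf_{p ∈ (r,1)} M^p(x₁,x₂) = (r/(1−r))(x₁+x₂) + (2√r/(1−r))√(x₁x₂)`. -/
theorem shape_variational (r : ℝ) (hr0 : 0 < r) (hr1 : r < 1)
    (x₁ x₂ : ℝ) (h1 : 0 ≤ x₁) (h2 : 0 ≤ x₂) :
    sInf ((fun p => Mfun r p x₁ x₂) '' Set.Ioo r 1) =
      r / (1 - r) * (x₁ + x₂) + 2 * Real.sqrt r / (1 - r) * Real.sqrt (x₁ * x₂) := by
  have hc0 : (0:ℝ) < 1 - r := by linarith
  set a1 := Real.sqrt x₁ with ha1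
  set s := Real.sqrt (r * x₂) with hs
  have ha1sq : a1 ^ 2 = x₁ := Real.sq_sqrt h1
  have hssq : s ^ 2 = r * x₂ := Real.sq_sqrt (by positivity)
  have hcross : Real.sqrt r * Real.sqrt (x₁ * x₂) = a1 * s := by
    rw [ha1, hs, ← Real.sqrt_mul hr0.le, show r * (x₁ * x₂) = x₁ * (r * x₂) by ring,
      Real.sqrt_mul h1]
  set T := r / (1 - r) * (x₁ + x₂) + 2 * Real.sqrt r / (1 - r) * Real.sqrt (x₁ * x₂) with hT
  -- key identity
  have key : ∀ p ∈ Set.Ioo r 1, Mfun r p x₁ x₂ =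
      T + (a1 * (p - r) - s * (1 - p)) ^ 2 / ((1 - r) * (p - r) * (1 - p)) := by
    intro p hp
    have h3 : (0:ℝ) < p - r := by linarith [hp.1]
    have h4 : (0:ℝ) < 1 - p := by linarith [hp.2]
    rw [hT]
    unfold Mfun
    rw [show 2 * Real.sqrt r / (1 - r) * Real.sqrt (x₁ * x₂)
          = 2 * (Real.sqrt r * Real.sqrt (x₁ * x₂)) / (1 - r) by ring, hcross,
      show r / (1 - r) * (x₁ + x₂) = (r * x₁) / (1 - r) + (r * x₂) / (1 - r) by ring,
      ← hssq, ← ha1sq]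
    field_simp
    ring
  have hlb : ∀ y ∈ (fun p => Mfun r p x₁ x₂) '' Set.Ioo r 1, T ≤ y := by
    rintro y ⟨p, hp, rfl⟩
    show T ≤ Mfun r p x₁ x₂
    rw [key p hp]
    have h3 : (0:ℝ) < p - r := by linarith [hp.1]
    have h4 : (0:ℝ) < 1 - p := by linarith [hp.2]
    have hd : 0 < (1 - r) * (p - r) * (1 - p) := by positivity
    have hn : 0 ≤ (a1 * (p - r) - s * (1 - p)) ^ 2 := sq_nonneg _
    have := div_nonneg hn hd.le
    linarith
  have hne : ((fun p => Mfun r p x₁ x₂) '' Set.Ioo r 1).Nonempty :=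
    ⟨_, Set.mem_image_of_mem _ (show (r+1)/2 ∈ Set.Ioo r 1 by constructor <;> [linarith; linarith])⟩
  have hbdd : BddBelow ((fun p => Mfun r p x₁ x₂) '' Set.Ioo r 1) := ⟨T, hlb⟩
  refine le_antisymm ?_ (le_csInf hne hlb)
  by_cases hx1 : x₁ = 0
  · -- limit as p → 1⁻
    subst hx1
    have hTval : T = r * x₂ / (1 - r) := by
      rw [hT, zero_mul, Real.sqrt_zero]; ring
    have hcont : Filter.Tendsto (fun p => Mfun r p 0 x₂) (nhdsWithin 1 (Set.Ioo r 1)) (nhds T) := by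
      have hfe : (fun p => Mfun r p 0 x₂) = fun p => r * x₂ / (p - r) := by
        funext p; unfold Mfun; simp
      have h : ContinuousAt (fun p => Mfun r p 0 x₂) 1 := by
        rw [hfe]
        exact continuousAt_const.div (continuousAt_id.sub continuousAt_const)
          (by simpa using sub_ne_zero_of_ne (ne_of_gt hr1))
      have h2 : Filter.Tendsto (fun p => Mfun r p 0 x₂) (nhds 1) (nhds (Mfun r 1 0 x₂)) := h
      have : Mfun r 1 0 x₂ = T := by rw [hTval]; unfold Mfun; simp
      rw [this] at h2
      exact h2.mono_left nhdsWithin_le_nhds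
    have : Filter.NeBot (nhdsWithin 1 (Set.Ioo r 1)) := right_nhdsWithin_Ioo_neBot hr1
    refine ge_of_tendsto hcont ?_
    filter_upwards [self_mem_nhdsWithin] with p hp
    exact csInf_le hbdd (Set.mem_image_of_mem _ hp)
  · by_cases hx2 : x₂ = 0
    · -- limit as p → r⁺
      subst hx2
      have hTval : T = r * x₁ / (1 - r) := by
        rw [hT, mul_zero, Real.sqrt_zero]; ring
      have hcont : Filter.Tendsto (fun p => Mfun r p x₁ 0) (nhdsWithin r (Set.Ioo r 1))
          (nhds T) := by
        have hfe : (fun p => Mfun r p x₁ 0) = fun p => p * x₁ / (1 - p) := by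
          funext p; unfold Mfun; simp
        have h : ContinuousAt (fun p => Mfun r p x₁ 0) r := by
          rw [hfe]
          exact (continuousAt_id.mul continuousAt_const).div
            (continuousAt_const.sub continuousAt_id)
            (ne_of_gt hc0)
        have h2 : Filter.Tendsto (fun p => Mfun r p x₁ 0) (nhds r) (nhds (Mfun r r x₁ 0)) := h
        have : Mfun r r x₁ 0 = T := by rw [hTval]; unfold Mfun; simp
        rw [this] at h2
        exact h2.mono_left nhdsWithin_le_nhds
      have : Filter.NeBot (nhdsWithin r (Set.Ioo r 1)) := left_nhdsWithin_Ioo_neBot hr1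
      refine ge_of_tendsto hcont ?_
      filter_upwards [self_mem_nhdsWithin] with p hp
      exact csInf_le hbdd (Set.mem_image_of_mem _ hp)
    · -- interior minimizer
      have hx1' : 0 < x₁ := lt_of_le_of_ne h1 (Ne.symm hx1)
      have hx2' : 0 < x₂ := lt_of_le_of_ne h2 (Ne.symm hx2)
      have ha1' : 0 < a1 := Real.sqrt_pos.mpr hx1'
      have hs' : 0 < s := Real.sqrt_pos.mpr (by positivity)
      set t := s / a1 with ht
      have ht0 : 0 < t := by positivity
      set p := (r + t) / (1 + t) with hp
      have hpmem : p ∈ Set.Ioo r 1 := by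
        constructor
        · rw [hp, lt_div_iff₀ (by linarith)]; nlinarith
        · rw [hp, div_lt_one (by linarith)]; linarith
      have hnum : a1 * (p - r) - s * (1 - p) = 0 := by
        rw [hp, ht]
        have h1t : (1:ℝ) + s / a1 ≠ 0 := by positivity
        field_simp
        ring
      have hMT : Mfun r p x₁ x₂ = T := by
        rw [key p hpmem, hnum]
        simp
      calc sInf ((fun p => Mfun r p x₁ x₂) '' Set.Ioo r 1) ≤ Mfun r p x₁ x₂ :=
            csInf_le hbdd (Set.mem_image_of_mem _ hpmem)
        _ = T := hMT
end
end

section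
/- Fix 0 < r < 1 and a, b > 0. The function p ↦ M^p(a,b) = pa/(1−p) + rb/(p−r) is continuous and strictly convex on (r,1), decreasing on (r, p̄(a,b)] with range [γ(a,b), ∞), and increasing on [p̄(a,b), 1) with range [γ(a,b), ∞), where p̄(a,b) = (r(a+b) + (r+1)√(rab)) / (a + rb + 2√(rab)) and γ(a,b) = (r/(1−r))(a+b) + (2√r/(1−r))√(ab). -/
noncomputable section

/-- The shape function `γ(a,b) = (r/(1−r))(a+b) + (2√r/(1−r))√(ab)`. -/
def gam (r a b : ℝ) : ℝ :=
  r / (1 - r) * (a + b) + 2 * Real.sqrt r / (1 - r) * Real.sqrt (a * b)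

/-!
With `s = √a` and `t = √(rb)` one has `p̄ = (rs + t)/(s + t)`, and the derivative
`a/(1-p)² - rb/(p-r)²` of `M` factors as `(s(p-r) - t(1-p))(s(p-r) + t(1-p))/((1-p)²(p-r)²)`,
whose first factor is `(s + t)(p - p̄)`. So `M` falls strictly up to `p̄` and rises strictly after
it, with minimum `M(p̄) = (rs² + 2st + t²)/(1-r) = γ`; strict convexity holds because each term
of the derivative is strictly increasing in `p`. Since `M` tends to `+∞` at both ends
of `(r,1)`, the intermediate value theorem makes each branch cover `[γ, ∞)`.
-/

open Filter Set Topology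

section ImageOfUnbounded

variable {α β : Type*} [ConditionallyCompleteLinearOrder α] [TopologicalSpace α]
  [OrderTopology α] [DenselyOrdered α]
  [LinearOrder β] [TopologicalSpace β] [OrderClosedTopology β]
  {f : α → β} {a b : α}

theorem AntitoneOn.image_Ioc_eq_Ici_of_tendsto_atTop (hab : a < b)
    (hanti : AntitoneOn f (Ioc a b))
    (hf : ContinuousOn f (Ioc a b)) (htop : Tendsto f (𝓝[>] a) atTop) :
    f '' Ioc a b = Ici (f b) := by
  have hb : b ∈ Ioc a b := right_mem_Ioc.2 hab
  have := nhdsGT_neBot_of_exists_gt ⟨b, hab⟩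
  refine Subset.antisymm ?_ ?_
  · rintro _ ⟨x, hx, rfl⟩
    exact hanti hx hb hx.2
  · exact isPreconnected_Ioc.intermediate_value_Ici hb
      (le_principal_iff.2 (Ioc_mem_nhdsGT hab)) hf htop

theorem MonotoneOn.image_Ico_eq_Ici_of_tendsto_atTop (hab : a < b)
    (hmono : MonotoneOn f (Ico a b))
    (hf : ContinuousOn f (Ico a b)) (htop : Tendsto f (𝓝[<] b) atTop) :
    f '' Ico a b = Ici (f a) := by
  have ha : a ∈ Ico a b := left_mem_Ico.2 hab
  have := nhdsLT_neBot_of_exists_lt ⟨a, hab⟩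
  refine Subset.antisymm ?_ ?_
  · rintro _ ⟨x, hx, rfl⟩
    exact hmono ha hx hx.1
  · exact isPreconnected_Ico.intermediate_value_Ici ha
      (le_principal_iff.2 (Ico_mem_nhdsLT hab)) hf htop

end ImageOfUnbounded

section StationaryShape

variable {r a b p : ℝ}

theorem hasDerivAt_Mfun (hp1 : p ≠ 1) (hpr : p ≠ r) :
    HasDerivAt (fun q => Mfun r q a b) (a / (1 - p) ^ 2 - r * b / (p - r) ^ 2) p := by
  have h1 : (1 : ℝ) - p ≠ 0 := sub_ne_zero.2 (Ne.symm hp1)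
  have h2 : p - r ≠ 0 := sub_ne_zero.2 hpr
  refine ((((hasDerivAt_id p).mul_const a).div ((hasDerivAt_const p 1).sub (hasDerivAt_id p))
    h1).add ((hasDerivAt_const p (r * b)).div ((hasDerivAt_id p).sub_const r) h2)).congr_deriv ?_
  simp only [Pi.sub_apply, id_eq]
  field_simp
  ring

theorem continuousOn_Mfun : ContinuousOn (fun p => Mfun r p a b) (Ioo r 1) := fun _ hp =>
  (hasDerivAt_Mfun hp.2.ne hp.1.ne').continuousAt.continuousWithinAt

theorem strictConvexOn_Mfun (ha : 0 < a) (hrb : 0 < r * b) :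
    StrictConvexOn ℝ (Ioo r 1) (fun p => Mfun r p a b) := by
  refine StrictMonoOn.strictConvexOn_of_deriv (convex_Ioo r 1) continuousOn_Mfun ?_
  rw [interior_Ioo]
  intro p hp q hq hpq
  rw [(hasDerivAt_Mfun hp.2.ne hp.1.ne').deriv, (hasDerivAt_Mfun hq.2.ne hq.1.ne').deriv]
  have hq1 : 0 < 1 - q := sub_pos.2 hq.2
  have hpr : 0 < p - r := sub_pos.2 hp.1
  have h1 : a / (1 - p) ^ 2 < a / (1 - q) ^ 2 :=
    div_lt_div_of_pos_left ha (by positivity) (pow_lt_pow_left₀ (by linarith) hq1.le two_ne_zero)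
  have h2 : r * b / (q - r) ^ 2 < r * b / (p - r) ^ 2 :=
    div_lt_div_of_pos_left hrb (by positivity) (pow_lt_pow_left₀ (by linarith) hpr.le two_ne_zero)
  linarith

theorem pbar_eq (ha : 0 < a) (hrb : 0 ≤ r * b) :
    pbar r a b = (r * √a + √(r * b)) / (√a + √(r * b)) := by
  have hs : 0 < √a := Real.sqrt_pos.2 ha
  have ht : 0 ≤ √(r * b) := Real.sqrt_nonneg _
  have hst : √(r * a * b) = √a * √(r * b) := by
    rw [← Real.sqrt_mul ha.le]; ring_nf
  rw [pbar, hst, div_eq_div_iff (by positivity) (by positivity)]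
  linear_combination (1 - r) * √(r * b) * Real.sq_sqrt ha.le - (1 - r) * √a * Real.sq_sqrt hrb

theorem pbar_mem_Ioo (hr1 : r < 1) (ha : 0 < a) (hrb : 0 < r * b) : pbar r a b ∈ Ioo r 1 := by
  have hs : 0 < √a := Real.sqrt_pos.2 ha
  have ht : 0 < √(r * b) := Real.sqrt_pos.2 hrb
  rw [pbar_eq ha hrb.le, mem_Ioo, lt_div_iff₀ (by positivity), div_lt_one (by positivity)]
  constructor <;> nlinarith

theorem deriv_Mfun_eq_pos_mul_sub_pbar (ha : 0 < a) (hrb : 0 < r * b) (hp : p ∈ Ioo r 1) :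
    ∃ c > 0, deriv (fun q => Mfun r q a b) p = c * (p - pbar r a b) := by
  rw [(hasDerivAt_Mfun hp.2.ne hp.1.ne').deriv, pbar_eq ha hrb.le]
  have hs : 0 < √a := Real.sqrt_pos.2 ha
  have ht : 0 < √(r * b) := Real.sqrt_pos.2 hrb
  have hp1 : 0 < 1 - p := sub_pos.2 hp.2
  have hpr : 0 < p - r := sub_pos.2 hp.1
  refine ⟨(√a + √(r * b)) * (√a * (p - r) + √(r * b) * (1 - p)) /
    ((1 - p) ^ 2 * (p - r) ^ 2), by positivity, ?_⟩
  field_simp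
  linear_combination (1 - p) ^ 2 * Real.sq_sqrt hrb.le - (p - r) ^ 2 * Real.sq_sqrt ha.le

theorem Mfun_pbar (hr0 : 0 < r) (hr1 : r < 1) (ha : 0 < a) (hb : 0 < b) :
    Mfun r (pbar r a b) a b = gam r a b := by
  have hrb : 0 < r * b := mul_pos hr0 hb
  have hs : 0 < √a := Real.sqrt_pos.2 ha
  have ht : 0 < √(r * b) := Real.sqrt_pos.2 hrb
  have h1r : 1 - r ≠ 0 := (sub_pos.2 hr1).ne'
  have hrab : √r * √(a * b) = √a * √(r * b) := by
    rw [← Real.sqrt_mul hr0.le, ← Real.sqrt_mul ha.le]; ring_nf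
  have hgam : gam r a b = (r * a + 2 * (√a * √(r * b)) + r * b) / (1 - r) := by
    rw [gam, ← hrab]; field_simp; ring
  have h1 : 1 - pbar r a b = √a * (1 - r) / (√a + √(r * b)) := by
    rw [pbar_eq ha hrb.le]; field_simp; ring
  have h2 : pbar r a b - r = √(r * b) * (1 - r) / (√a + √(r * b)) := by
    rw [pbar_eq ha hrb.le]; field_simp; ring
  rw [Mfun, h1, h2, hgam, pbar_eq ha hrb.le]
  field_simp
  linear_combination -(√(r * b) ^ 2 * Real.sq_sqrt ha.le) -
    √a ^ 2 * Real.sq_sqrt hrb.le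

theorem tendsto_Mfun_nhdsGT (hr1 : r ≠ 1) (hrb : 0 < r * b) :
    Tendsto (fun p => Mfun r p a b) (𝓝[>] r) atTop := by
  have hfin : Tendsto (fun p => p * a / (1 - p)) (𝓝[>] r) (𝓝 (r * a / (1 - r))) :=
    ((tendsto_id.mul_const a).div (tendsto_const_nhds.sub tendsto_id)
      (sub_ne_zero.2 hr1.symm)).mono_left nhdsWithin_le_nhds
  have hsub : Tendsto (fun p => p - r) (𝓝[>] r) (𝓝[>] 0) := by
    refine tendsto_nhdsWithin_iff.2
      ⟨?_, eventually_nhdsWithin_of_forall fun p hp => mem_Ioi.2 (sub_pos.2 hp)⟩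
    simpa using (tendsto_id.sub_const r).mono_left (nhdsWithin_le_nhds (a := r))
  have hinf : Tendsto (fun p => r * b / (p - r)) (𝓝[>] r) atTop := by
    simpa only [div_eq_mul_inv, Pi.inv_apply] using hsub.inv_tendsto_nhdsGT_zero.const_mul_atTop hrb
  exact hfin.add_atTop hinf

theorem tendsto_Mfun_nhdsLT_one (hr1 : r < 1) (ha : 0 < a) :
    Tendsto (fun p => Mfun r p a b) (𝓝[<] 1) atTop := by
  have hsub : Tendsto (fun p : ℝ => 1 - p) (𝓝[<] 1) (𝓝[>] 0) := by
    refine tendsto_nhdsWithin_iff.2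
      ⟨?_, eventually_nhdsWithin_of_forall fun p hp => mem_Ioi.2 (sub_pos.2 hp)⟩
    simpa using ((tendsto_const_nhds (x := (1 : ℝ))).sub tendsto_id).mono_left
      (nhdsWithin_le_nhds (a := (1 : ℝ)))
  have hinf : Tendsto (fun p => p * a / (1 - p)) (𝓝[<] 1) atTop := by
    have hpa : Tendsto (fun p => p * a) (𝓝[<] 1) (𝓝 a) := by
      simpa using (tendsto_id.mul_const a).mono_left (nhdsWithin_le_nhds (a := (1 : ℝ)))
    simpa only [div_eq_mul_inv, Pi.inv_apply] using
      hpa.pos_mul_atTop ha hsub.inv_tendsto_nhdsGT_zero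
  have hfin : Tendsto (fun p => r * b / (p - r)) (𝓝[<] 1) (𝓝 (r * b / (1 - r))) :=
    (tendsto_const_nhds.div (tendsto_id.sub_const r)
      (sub_ne_zero.2 hr1.ne')).mono_left (nhdsWithin_le_nhds (a := (1 : ℝ)))
  exact hinf.atTop_add hfin

theorem strictAntiOn_Mfun (hr1 : r < 1) (ha : 0 < a) (hrb : 0 < r * b) :
    StrictAntiOn (fun p => Mfun r p a b) (Ioc r (pbar r a b)) := by
  have hpbar := pbar_mem_Ioo hr1 ha hrb
  refine strictAntiOn_of_deriv_neg (convex_Ioc _ _)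
    (continuousOn_Mfun.mono (Ioc_subset_Ioo_right hpbar.2)) fun p hp => ?_
  rw [interior_Ioc] at hp
  obtain ⟨c, hc, hderiv⟩ := deriv_Mfun_eq_pos_mul_sub_pbar ha hrb ⟨hp.1, hp.2.trans hpbar.2⟩
  rw [hderiv]
  exact mul_neg_of_pos_of_neg hc (sub_neg.2 hp.2)

theorem strictMonoOn_Mfun (hr1 : r < 1) (ha : 0 < a) (hrb : 0 < r * b) :
    StrictMonoOn (fun p => Mfun r p a b) (Ico (pbar r a b) 1) := by
  have hpbar := pbar_mem_Ioo hr1 ha hrb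
  refine strictMonoOn_of_deriv_pos (convex_Ico _ _)
    (continuousOn_Mfun.mono (Ico_subset_Ioo_left hpbar.1)) fun p hp => ?_
  rw [interior_Ico] at hp
  obtain ⟨c, hc, hderiv⟩ := deriv_Mfun_eq_pos_mul_sub_pbar ha hrb ⟨hpbar.1.trans hp.1, hp.2⟩
  rw [hderiv]
  exact mul_pos hc (sub_pos.2 hp.1)

end StationaryShape

/-- **Properties of `p ↦ M^p(a,b)`.** For `0 < r < 1` and `a, b > 0`, the map
`p ↦ M^p(a,b)` is continuous and strictly convex on `(r,1)`, decreasing on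
`(r, p̄(a,b)]` with range `[γ(a,b), ∞)`, and increasing on `[p̄(a,b), 1)` with range
`[γ(a,b), ∞)`. -/
theorem stationary_shape_properties (r a b : ℝ) (hr0 : 0 < r) (hr1 : r < 1)
    (ha : 0 < a) (hb : 0 < b) :
    ContinuousOn (fun p => Mfun r p a b) (Set.Ioo r 1) ∧
    StrictConvexOn ℝ (Set.Ioo r 1) (fun p => Mfun r p a b) ∧
    StrictAntiOn (fun p => Mfun r p a b) (Set.Ioc r (pbar r a b)) ∧
    (fun p => Mfun r p a b) '' Set.Ioc r (pbar r a b) = Set.Ici (gam r a b) ∧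
    StrictMonoOn (fun p => Mfun r p a b) (Set.Ico (pbar r a b) 1) ∧
    (fun p => Mfun r p a b) '' Set.Ico (pbar r a b) 1 = Set.Ici (gam r a b) := by
  have hrb : 0 < r * b := mul_pos hr0 hb
  have hpbar := pbar_mem_Ioo hr1 ha hrb
  have hanti := strictAntiOn_Mfun hr1 ha hrb
  have hmono := strictMonoOn_Mfun hr1 ha hrb
  refine ⟨continuousOn_Mfun, strictConvexOn_Mfun ha hrb, hanti, ?_, hmono, ?_⟩
  · rw [hanti.antitoneOn.image_Ioc_eq_Ici_of_tendsto_atTop hpbar.1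
      (continuousOn_Mfun.mono (Ioc_subset_Ioo_right hpbar.2)) (tendsto_Mfun_nhdsGT hr1.ne hrb),
      Mfun_pbar hr0 hr1 ha hb]
  · rw [hmono.monotoneOn.image_Ico_eq_Ici_of_tendsto_atTop hpbar.2
      (continuousOn_Mfun.mono (Ico_subset_Ioo_left hpbar.1)) (tendsto_Mfun_nhdsLT_one hr1 ha),
      Mfun_pbar hr0 hr1 ha hb]

end
end

section
/- Fix 0 < r < 1. Let ξ ∈ ℝ²_{>0}, q ∈ [r,1), and λ ∈ (1, 1/q). Then the infimum inf_{q < s < 1/λ} L^{s,λs}(ξ) equals L^{s₀, λs₀}(ξ) with s₀ = max{q, p̄₋^λ(ξ)}; moreover, if p̄₋^λ(ξ) > q the infimum is uniquely attained at s = p̄₋^λ(ξ), while if p̄₋^λ(ξ) ≤ q then s ↦ L^{s,λs}(ξ) is strictly increasing on (q, 1/λ). -/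
/-!
Along the ray `(p, q) = (s, λs)` the function `f(s) = L^{s,λs}(ξ)` has derivative
`(M^{λs}(ξ) − M^s(ξ)) / s`, and `M^{λs} − M^s` is a positive multiple of
`g(s) = ξ₁(s − r)(λs − r) − rξ₂(1 − s)(1 − λs)` (`mfunGapNumerator`), which is strictly
increasing on `[r, 1/λ]`.
The equation `M^{p̄₋}(ξ) = M^{λp̄₋}(ξ)` says `g(p̄₋) = 0`, so `f` strictly decreases on `(r, p̄₋]` and
strictly increases on `[p̄₋, 1/λ)`; restricting to `(q, 1/λ)` gives all three claims.
-/

noncomputable section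

/-- `L^{p,q}(ξ) = ξ₁ log((1−p)/(1−q)) + ξ₂ log((1−r/q)/(1−r/p))`. -/
def Lfun (r p q x₁ x₂ : ℝ) : ℝ :=
  x₁ * Real.log ((1 - p) / (1 - q)) + x₂ * Real.log ((1 - r / q) / (1 - r / p))

open Set

theorem StrictAntiOn.apply_lt_apply_of_strictMonoOn {α β : Type*} [LinearOrder α] [Preorder β]
    {f : α → β} {a b p s : α} (hanti : StrictAntiOn f (Ioc a p))
    (hmono : StrictMonoOn f (Ico p b)) (hs : s ∈ Ioo a b) (hsp : s ≠ p) : f p < f s := by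
  rcases hsp.lt_or_gt with hsp | hps
  · exact hanti ⟨hs.1, hsp.le⟩ ⟨hs.1.trans hsp, le_rfl⟩ hsp
  · exact hmono ⟨le_rfl, hps.trans hs.2⟩ ⟨hps.le, hs.2⟩ hps

def mfunGapNumerator (r lam a b s : ℝ) : ℝ :=
  a * (s - r) * (lam * s - r) - r * b * (1 - s) * (1 - lam * s)

section Ray

variable {r lam a b p s : ℝ}

theorem hasDerivAt_Lfun_ray (hr : 0 < r) (hlam : 1 ≤ lam) (hs : r < s) (hls : lam * s < 1) :
    HasDerivAt (fun t => Lfun r t (lam * t) a b)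
      ((Mfun r (lam * s) a b - Mfun r s a b) / s) s := by
  have hs0 : 0 < s := hr.trans hs
  have hsls : s ≤ lam * s := le_mul_of_one_le_left hs0.le hlam
  have h1s : 1 - s ≠ 0 := by linarith
  have h1ls : 1 - lam * s ≠ 0 := by linarith
  have hsr : s - r ≠ 0 := by linarith
  have hlsr : lam * s - r ≠ 0 := by linarith
  have hls0 : lam * s ≠ 0 := by linarith
  have hv : 1 - r / s ≠ 0 := by
    rw [sub_ne_zero, ne_comm, Ne, div_eq_one_iff_eq hs0.ne']; exact hs.ne
  have hu : 1 - r / (lam * s) ≠ 0 := by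
    rw [sub_ne_zero, ne_comm, Ne, div_eq_one_iff_eq hls0]; linarith
  have hA := ((hasDerivAt_id' s).const_sub 1).fun_div
    (((hasDerivAt_id' s).const_mul lam).const_sub 1) h1ls
  have hB := ((hasDerivAt_const s r).fun_div ((hasDerivAt_id' s).const_mul lam) hls0
    |>.const_sub 1).fun_div ((hasDerivAt_const s r).fun_div (hasDerivAt_id' s) hs0.ne'
    |>.const_sub 1) hv
  refine (((hA.log (div_ne_zero h1s h1ls)).const_mul a).add
    ((hB.log (div_ne_zero hu hv)).const_mul b)).congr_deriv ?_
  unfold Mfun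
  field_simp
  ring

theorem sign_Mfun_sub_Mfun (hr : 0 < r) (hlam : 1 < lam) (hs : r < s) (hls : lam * s < 1) :
    SignType.sign (Mfun r (lam * s) a b - Mfun r s a b) =
      SignType.sign (mfunGapNumerator r lam a b s) := by
  have hs0 : 0 < s := hr.trans hs
  have hsls : s < lam * s := lt_mul_of_one_lt_left hs0 hlam
  have h1s : 0 < 1 - s := by linarith
  have h1ls : 0 < 1 - lam * s := by linarith
  have hsr : 0 < s - r := by linarith
  have hlsr : 0 < lam * s - r := by linarith
  have hfactor : Mfun r (lam * s) a b - Mfun r s a b =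
      (lam - 1) * s / ((1 - s) * (1 - lam * s) * (s - r) * (lam * s - r)) *
        mfunGapNumerator r lam a b s := by
    unfold Mfun mfunGapNumerator
    field_simp
    ring
  have hpos : 0 < (lam - 1) * s / ((1 - s) * (1 - lam * s) * (s - r) * (lam * s - r)) := by
    have : 0 < lam - 1 := by linarith
    positivity
  rw [hfactor, sign_mul, sign_pos hpos, one_mul]

theorem strictMonoOn_mfunGapNumerator (hr : 0 < r) (hlam : 1 ≤ lam) (ha : 0 < a) (hb : 0 < b) :
    StrictMonoOn (mfunGapNumerator r lam a b) (Icc r (1 / lam)) := by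
  intro s ⟨hrs, hsl⟩ t ⟨_, htl⟩ hst
  have hlam0 : 0 < lam := by linarith
  rw [le_div_iff₀ hlam0] at hsl htl
  have hX : (s - r) * (lam * s - r) < (t - r) * (lam * t - r) := by
    have hlsr : 0 ≤ lam * s - r := by nlinarith
    nlinarith [mul_pos (sub_pos.2 hst) (mul_pos hlam0 (sub_pos.2 (hrs.trans_lt hst))),
      mul_nonneg (sub_pos.2 hst).le hlsr]
  have hY : (1 - t) * (1 - lam * t) < (1 - s) * (1 - lam * s) := by
    nlinarith [mul_pos (sub_pos.2 hst) (mul_pos hlam0 (sub_pos.2 hst))]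
  unfold mfunGapNumerator
  nlinarith [mul_lt_mul_of_pos_left hX ha, mul_lt_mul_of_pos_left hY (mul_pos hr hb)]

theorem sign_Mfun_sub_Mfun_eq_sign_sub (hr : 0 < r) (hlam : 1 < lam) (ha : 0 < a) (hb : 0 < b)
    (hp : r < p) (hlp : lam * p < 1) (hM : Mfun r p a b = Mfun r (lam * p) a b)
    (hs : r < s) (hls : lam * s < 1) :
    SignType.sign (Mfun r (lam * s) a b - Mfun r s a b) = SignType.sign (s - p) := by
  have hlam0 : 0 < lam := by linarith
  have hgp : mfunGapNumerator r lam a b p = 0 := by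
    rw [← sign_eq_zero_iff, ← sign_Mfun_sub_Mfun hr hlam hp hlp, hM, sub_self, sign_zero]
  have hmem : ∀ {t}, r < t → lam * t < 1 → t ∈ Icc r (1 / lam) :=
    fun ht hlt => ⟨ht.le, ((le_div_iff₀' hlam0).2 hlt.le)⟩
  have hg := strictMonoOn_mfunGapNumerator hr hlam.le ha hb
  rw [sign_Mfun_sub_Mfun hr hlam hs hls]
  rcases lt_trichotomy s p with hsp | rfl | hps
  · rw [sign_neg (hgp ▸ hg (hmem hs hls) (hmem hp hlp) hsp), sign_neg (sub_neg.2 hsp)]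
  · rw [hgp, sub_self]
  · rw [sign_pos (hgp ▸ hg (hmem hp hlp) (hmem hs hls) hps), sign_pos (sub_pos.2 hps)]

theorem strictAntiOn_Lfun_ray (hr : 0 < r) (hlam : 1 < lam) (ha : 0 < a) (hb : 0 < b)
    (hp : r < p) (hlp : lam * p < 1) (hM : Mfun r p a b = Mfun r (lam * p) a b) :
    StrictAntiOn (fun t => Lfun r t (lam * t) a b) (Ioc r p) := by
  have hlt : ∀ {t}, t ≤ p → lam * t < 1 := fun ht =>
    (mul_le_mul_of_nonneg_left ht (by linarith)).trans_lt hlp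
  refine strictAntiOn_of_hasDerivWithinAt_neg (convex_Ioc r p)
    (fun t ht => (hasDerivAt_Lfun_ray hr hlam.le ht.1 (hlt ht.2)).continuousAt.continuousWithinAt)
    (fun t ht => (hasDerivAt_Lfun_ray hr hlam.le ?_ ?_).hasDerivWithinAt) fun t ht => ?_
  all_goals rw [interior_Ioc] at ht
  · exact ht.1
  · exact hlt ht.2.le
  · refine div_neg_of_neg_of_pos ?_ (hr.trans ht.1)
    rw [← sign_eq_neg_one_iff, sign_Mfun_sub_Mfun_eq_sign_sub hr hlam ha hb hp hlp hM ht.1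
      (hlt ht.2.le), sign_eq_neg_one_iff, sub_neg]
    exact ht.2

theorem strictMonoOn_Lfun_ray (hr : 0 < r) (hlam : 1 < lam) (ha : 0 < a) (hb : 0 < b)
    (hp : r < p) (hlp : lam * p < 1) (hM : Mfun r p a b = Mfun r (lam * p) a b) :
    StrictMonoOn (fun t => Lfun r t (lam * t) a b) (Ico p (1 / lam)) := by
  have hlt : ∀ {t}, t < 1 / lam → lam * t < 1 := fun ht => (lt_div_iff₀' (by linarith)).1 ht
  refine strictMonoOn_of_hasDerivWithinAt_pos (convex_Ico p (1 / lam))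
    (fun t ht => (hasDerivAt_Lfun_ray hr hlam.le (hp.trans_le ht.1)
      (hlt ht.2)).continuousAt.continuousWithinAt)
    (fun t ht => (hasDerivAt_Lfun_ray hr hlam.le ?_ ?_).hasDerivWithinAt) fun t ht => ?_
  all_goals rw [interior_Ico] at ht
  · exact hp.trans ht.1
  · exact hlt ht.2
  · refine div_pos ?_ (hr.trans (hp.trans ht.1))
    rw [← sign_eq_one_iff, sign_Mfun_sub_Mfun_eq_sign_sub hr hlam ha hb hp hlp hM
      (hp.trans ht.1) (hlt ht.2), sign_eq_one_iff, sub_pos]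
    exact ht.1

end Ray

theorem restricted_logMGF_inf_general (r : ℝ) (hr0 : 0 < r)
    (x₁ x₂ : ℝ) (h1 : 0 < x₁) (h2 : 0 < x₂)
    (q : ℝ) (hq : q ∈ Set.Ico r 1) (lam : ℝ) (hlam : lam ∈ Set.Ioo 1 (1 / q))
    (pm : ℝ) (hpm1 : pm ∈ Set.Ioo r (pbar r x₁ x₂))
    (hpm2 : lam * pm ∈ Set.Ioo (pbar r x₁ x₂) 1)
    (hpm3 : Mfun r pm x₁ x₂ = Mfun r (lam * pm) x₁ x₂) :
    sInf ((fun s => Lfun r s (lam * s) x₁ x₂) '' Set.Ioo q (1 / lam))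
        = Lfun r (max q pm) (lam * max q pm) x₁ x₂ ∧
    (q < pm → pm ∈ Set.Ioo q (1 / lam) ∧
      ∀ s ∈ Set.Ioo q (1 / lam), s ≠ pm →
        Lfun r pm (lam * pm) x₁ x₂ < Lfun r s (lam * s) x₁ x₂) ∧
    (pm ≤ q → StrictMonoOn (fun s => Lfun r s (lam * s) x₁ x₂) (Set.Ioo q (1 / lam))) := by
  obtain ⟨hrq, -⟩ := hq
  obtain ⟨hlam1, hlamq⟩ := hlam
  have hlam0 : 0 < lam := by linarith
  have hqc : q < 1 / lam := (lt_one_div (hr0.trans_le hrq) hlam0).2 hlamq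
  have hpmc : pm < 1 / lam := (lt_div_iff₀' hlam0).2 hpm2.2
  have hanti := strictAntiOn_Lfun_ray hr0 hlam1 h1 h2 hpm1.1 hpm2.2 hpm3
  have hmono := strictMonoOn_Lfun_ray hr0 hlam1 h1 h2 hpm1.1 hpm2.2 hpm3
  set f := fun s => Lfun r s (lam * s) x₁ x₂
  have hmin : q < pm → pm ∈ Ioo q (1 / lam) ∧ ∀ s ∈ Ioo q (1 / lam), s ≠ pm → f pm < f s :=
    fun hqpm => ⟨⟨hqpm, hpmc⟩, fun _ hs hne =>
      (hanti.mono (Ioc_subset_Ioc_left hrq)).apply_lt_apply_of_strictMonoOn hmono hs hne⟩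
  have hinc : pm ≤ q → StrictMonoOn f (Ioo q (1 / lam)) :=
    fun hpq => hmono.mono (Ioo_subset_Ico_self.trans (Ico_subset_Ico_left hpq))
  refine ⟨?_, hmin, hinc⟩
  rcases le_or_gt pm q with hpq | hqpm
  · rw [max_eq_left hpq]
    have hcont : ContinuousWithinAt f (Ioo q (1 / lam)) (sInf (Ioo q (1 / lam))) := by
      rw [csInf_Ioo hqc]
      exact (hasDerivAt_Lfun_ray hr0 hlam1.le (hpm1.1.trans_le hpq)
        ((lt_div_iff₀' hlam0).1 hqc)).continuousAt.continuousWithinAt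
    rw [← (hinc hpq).monotoneOn.map_csInf_of_continuousWithinAt hcont (nonempty_Ioo.2 hqc)
      bddBelow_Ioo, csInf_Ioo hqc]
  · rw [max_eq_right hqpm.le]
    obtain ⟨hmem, hlt⟩ := hmin hqpm
    refine IsLeast.csInf_eq ⟨mem_image_of_mem f hmem, ?_⟩
    rintro _ ⟨s, hs, rfl⟩
    rcases eq_or_ne s pm with rfl | hne
    exacts [le_rfl, (hlt s hs hne).le]

/-- **Location of the infimum of `s ↦ L^{s,λs}(ξ)`.**
Let `0 < r < 1`, `ξ ∈ ℝ²_{>0}`, `q ∈ [r,1)`, `λ ∈ (1, 1/q)`, and let `pm = p̄₋^λ(ξ)`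
be characterized by `pm ∈ (r, p̄(ξ))`, `λ pm ∈ (p̄(ξ), 1)`, and
`M^{pm}(ξ) = M^{λ pm}(ξ)`.  Then `inf_{q < s < 1/λ} L^{s,λs}(ξ) = L^{s₀,λs₀}(ξ)`
with `s₀ = max(q, pm)`; if `pm > q` the infimum is uniquely attained at `pm`, and
if `pm ≤ q` then `s ↦ L^{s,λs}(ξ)` is strictly increasing on `(q, 1/λ)`. -/
theorem restricted_logMGF_inf (r : ℝ) (hr0 : 0 < r) (hr1 : r < 1)
    (x₁ x₂ : ℝ) (h1 : 0 < x₁) (h2 : 0 < x₂)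
    (q : ℝ) (hq : q ∈ Set.Ico r 1) (lam : ℝ) (hlam : lam ∈ Set.Ioo 1 (1 / q))
    (pm : ℝ) (hpm1 : pm ∈ Set.Ioo r (pbar r x₁ x₂))
    (hpm2 : lam * pm ∈ Set.Ioo (pbar r x₁ x₂) 1)
    (hpm3 : Mfun r pm x₁ x₂ = Mfun r (lam * pm) x₁ x₂) :
    sInf ((fun s => Lfun r s (lam * s) x₁ x₂) '' Set.Ioo q (1 / lam))
        = Lfun r (max q pm) (lam * max q pm) x₁ x₂ ∧
    (q < pm → pm ∈ Set.Ioo q (1 / lam) ∧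
      ∀ s ∈ Set.Ioo q (1 / lam), s ≠ pm →
        Lfun r pm (lam * pm) x₁ x₂ < Lfun r s (lam * s) x₁ x₂) ∧
    (pm ≤ q → StrictMonoOn (fun s => Lfun r s (lam * s) x₁ x₂) (Set.Ioo q (1 / lam))) :=
  restricted_logMGF_inf_general r hr0 x₁ x₂ h1 h2 q hq lam hlam pm hpm1 hpm2 hpm3

end
end

section
/- Fix 0 < r < 1, let m, n ∈ ℕ, q ∈ [r,1), and λ ≥ 1. Let (ω_{(i,j)})_{i≥1,j≥1} be i.i.d. Geom(r) random variables and (I^q_{(i,0)})_{i≥1} be i.i.d. Geom(q) random variables independent of the bulk, and define G^q(m,n|1,0) = max_{1≤j≤m}{Σ_{i=1}^j I^q_{(i,0)} + G_{(j,1),(m,n)}}. Then log E[exp{log(λ) · G^q(m,n|1,0)}] ≤ 𝓛^{λ,q}(m,n). -/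
open MeasureTheory ProbabilityTheory

noncomputable section

/-- A lattice site. -/
abbrev Site := ℤ × ℤ

def e1 : Site := (1, 0)
def e2 : Site := (0, 1)

/-- `π 0, π 1, …, π n` is an up-right path: each increment is `e₁` or `e₂`. -/
def IsUpRight (π : ℕ → Site) (n : ℕ) : Prop :=
  ∀ i < n, π (i + 1) = π i + e1 ∨ π (i + 1) = π i + e2

/-- Total weight collected by the path `π 0, …, π n`. -/
def pathWeight (ω : Site → ℝ) (π : ℕ → Site) (n : ℕ) : ℝ :=
  ∑ i ∈ Finset.range (n + 1), ω (π i)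

/-- Last-passage time from `x` to `y`. -/
def lppG (ω : Site → ℝ) (x y : Site) : ℝ :=
  sSup {w : ℝ | ∃ n : ℕ, ∃ π : ℕ → Site,
    IsUpRight π n ∧ π 0 = x ∧ π n = y ∧ w = pathWeight ω π n}

/-- The Geom(α) distribution on ℝ: mass `αⁿ(1−α)` at `n ∈ ℤ_{≥0}`. -/
def geomMeasure (α : ℝ) : Measure ℝ :=
  Measure.sum fun n : ℕ => (ENNReal.ofReal (α ^ n * (1 - α))) • Measure.dirac (n : ℝ)

/-- Sites carrying a weight: the bulk `ℕ²` and the horizontal boundary `{(i,0) : i ≥ 1}`. -/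
def HBdSites : Set Site := {v | (1 ≤ v.1 ∧ 1 ≤ v.2) ∨ (1 ≤ v.1 ∧ v.2 = 0)}

/-- `G^q(m,n|1,0)`: the boundary passage time forced to exit the horizontal boundary,
`max_{1≤j≤m} {Σ_{i=1}^j I^q_{(i,0)} + G_{(j,1),(m,n)}}`. -/
def Gq10 (ω : Site → ℝ) (m n : ℤ) : ℝ :=
  sSup {w : ℝ | ∃ j ∈ Finset.Icc (1 : ℤ) m,
    w = (∑ i ∈ Finset.Icc 1 j, ω (i, 0)) + lppG ω (j, 1) (m, n)}

/-- `𝓛^{λ,q}(ξ) = inf_{q<s<1/λ} L^{s,λs}(ξ)` for `λ ∈ [1, 1/q)`, and `∞` for `λ ≥ 1/q`. -/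
def calL (r q lam x₁ x₂ : ℝ) : EReal :=
  if lam < 1 / q then
    ((sInf ((fun s => Lfun r s (lam * s) x₁ x₂) '' Set.Ioo q (1 / lam)) : ℝ) : EReal)
  else ⊤

/-!
Only the weights in the box `[1, m] × [0, n]` matter, and almost surely they are natural
numbers, so the moment becomes a discrete iterated sum over i.i.d. geometric configurations, and
`G^q(m,n|1,0)` is at most the last-passage time `G(m, n)` of the box with bottom increments
`I^q` and a zero left boundary. Fix `s ∈ (q, 1/λ)`. Replacing `Geom(q)` by `Geom(s)` on the
bottom and adding an independent `Geom(r/(λs))` left boundary only increase `E λ^G`. Tilting the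
left boundary by `λ^{ΣJ}` turns it into `Geom(r/s)` at the price of `((1-r/(λs))/(1-r/s))^n`,
and the resulting model (bottom `Geom(s)`, left `Geom(r/s)`, bulk `Geom(r)`) is stationary: by
the Burke property of the corner map `(x, y, v) ↦ (v + (x - y)⁺, v + (y - x)⁺)`, the increments
along the top row are again i.i.d. `Geom(s)`. Since `G(m, n)` is the sum of the left boundary and
the top increments, `E λ^G = ((1-s)/(1-λs))^m ((1-r/(λs))/(1-r/s))^n = exp L^{s,λs}(m,n)`.
-/

open scoped ENNReal

namespace GeomLPP

section Sequences
variable {α : Type*}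

def seqCons (a : α) (d : ℕ → α) : ℕ → α
  | 0 => a
  | i + 1 => d i

@[simp] lemma seqCons_succ (a : α) (d : ℕ → α) (i : ℕ) : seqCons a d (i + 1) = d i := rfl

lemma seqCons_le_seqCons [Preorder α] {a a' : α} {d d' : ℕ → α} (ha : a ≤ a') (hd : d ≤ d') :
    seqCons a d ≤ seqCons a' d' := by
  rintro (_ | i)
  exacts [ha, hd i]

lemma sum_range_succ_seqCons (a : ℕ) (d : ℕ → ℕ) (k : ℕ) :
    ∑ i ∈ Finset.range (k + 1), seqCons a d i = a + ∑ i ∈ Finset.range k, d i := by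
  rw [Finset.sum_range_succ', add_comm]
  rfl

end Sequences

section GeomMass
variable {α : ℝ}

def geomMass (α : ℝ) (k : ℕ) : ℝ≥0∞ := ENNReal.ofReal (α ^ k * (1 - α))

lemma geomMeasure_singleton (α : ℝ) (k : ℕ) : geomMeasure α {(k : ℝ)} = geomMass α k := by
  rw [geomMeasure, Measure.sum_apply _ (measurableSet_singleton _), tsum_eq_single k]
  · simp [geomMass]
  · intro j hj
    simp [Set.indicator, hj]

lemma geomMeasure_compl_range_natCast (α : ℝ) :
    geomMeasure α (Set.range ((↑) : ℕ → ℝ))ᶜ = 0 := by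
  rw [geomMeasure, Measure.sum_apply _ (Set.countable_range _).measurableSet.compl]
  simp

lemma geomMass_eq_mul_pow (h0 : 0 ≤ α) (h1 : α ≤ 1) (k : ℕ) :
    geomMass α k = ENNReal.ofReal (1 - α) * ENNReal.ofReal α ^ k := by
  rw [geomMass, mul_comm, ENNReal.ofReal_mul (by linarith), ENNReal.ofReal_pow h0]

lemma tsum_geomMass (h0 : 0 ≤ α) (h1 : α < 1) : ∑' k, geomMass α k = 1 := by
  simp_rw [geomMass_eq_mul_pow h0 h1.le, ENNReal.tsum_mul_left, ENNReal.tsum_geometric,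
    ← ENNReal.ofReal_one, ← ENNReal.ofReal_sub _ h0]
  rw [ENNReal.ofReal_one]
  exact ENNReal.mul_inv_cancel (ENNReal.ofReal_pos.2 (by linarith)).ne' ENNReal.ofReal_ne_top

lemma geomMass_add (h0 : 0 ≤ α) (k j : ℕ) :
    geomMass α (k + j) = ENNReal.ofReal (α ^ j) * geomMass α k := by
  rw [geomMass, geomMass, ← ENNReal.ofReal_mul (pow_nonneg h0 j), pow_add]
  ring_nf

lemma tsum_geomMass_add (h0 : 0 ≤ α) (h1 : α < 1) (j : ℕ) :
    ∑' k, geomMass α (k + j) = ENNReal.ofReal (α ^ j) := by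
  simp_rw [geomMass_add h0, ENNReal.tsum_mul_left, tsum_geomMass h0 h1, mul_one]

lemma geomMass_mul_pow {t β : ℝ} (h0 : 0 ≤ α) (h1 : α ≤ 1) (ht : 0 ≤ t) (hβ : α * t = β)
    (hβ1 : β < 1) (k : ℕ) :
    geomMass α k * ENNReal.ofReal t ^ k = ENNReal.ofReal ((1 - α) / (1 - β)) * geomMass β k := by
  rw [geomMass, geomMass, ← ENNReal.ofReal_pow ht,
    ← ENNReal.ofReal_mul (mul_nonneg (pow_nonneg h0 k) (by linarith)),
    ← ENNReal.ofReal_mul (div_nonneg (by linarith) (by linarith)), ← hβ]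
  congr 1
  field_simp [show 1 - α * t ≠ 0 by linarith]
  ring

end GeomMass

section Corner

lemma pow_tsub_mul_pow_tsub_mul_pow_min {M : Type*} [CommMonoid M] (x y : M) (a b : ℕ) :
    x ^ (a - b) * y ^ (b - a) * (x * y) ^ min a b = x ^ a * y ^ b := by
  rcases le_total a b with h | h <;> obtain ⟨d, rfl⟩ := Nat.exists_eq_add_of_le h <;>
    simp [mul_pow, pow_add] <;> ac_rfl

variable {p c : ℝ}

lemma tsum_geomMass_corner (hp0 : 0 ≤ p) (hp1 : p < 1) (hc0 : 0 ≤ c) (hc1 : c < 1) (a b : ℕ) :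
    ∑' z, geomMass c (z + (b - a)) * geomMass (p * c) (min a b) * geomMass p (z + (a - b))
      = geomMass p a * geomMass c b := by
  have hpc0 : 0 ≤ p * c := mul_nonneg hp0 hc0
  have hpc1 : p * c < 1 := by nlinarith
  have term : ∀ z, geomMass c (z + (b - a)) * geomMass (p * c) (min a b) * geomMass p (z + (a - b))
      = geomMass p a * geomMass c b * geomMass (p * c) z := by
    intro z
    simp only [geomMass]
    have hc : 0 ≤ c ^ (z + (b - a)) * (1 - c) := mul_nonneg (pow_nonneg hc0 _) (by linarith)
    have hp : 0 ≤ p ^ a * (1 - p) := mul_nonneg (pow_nonneg hp0 _) (by linarith)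
    have hpc : 0 ≤ (p * c) ^ min a b * (1 - p * c) := mul_nonneg (pow_nonneg hpc0 _) (by linarith)
    rw [← ENNReal.ofReal_mul hc, ← ENNReal.ofReal_mul (mul_nonneg hc hpc), ← ENNReal.ofReal_mul hp,
      ← ENNReal.ofReal_mul (mul_nonneg hp (mul_nonneg (pow_nonneg hc0 _) (by linarith)))]
    congr 1
    rw [pow_add, pow_add, mul_pow]
    linear_combination (c ^ z * p ^ z * (1 - c) * (1 - p) * (1 - p * c)) *
      pow_tsub_mul_pow_tsub_mul_pow_min p c a b
  rw [tsum_congr term, ENNReal.tsum_mul_left, tsum_geomMass hpc0 hpc1, mul_one]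

def cornerEquiv : (ℕ × ℕ × ℕ) ≃ (ℕ × ℕ × ℕ) where
  toFun s := (s.2.2 + (s.2.1 - s.1), min s.1 s.2.1, s.2.2 + (s.1 - s.2.1))
  invFun t := (t.2.1 + (t.2.2 - t.1), t.2.1 + (t.1 - t.2.2), min t.2.2 t.1)
  left_inv s := by
    obtain ⟨a, b, z⟩ := s
    simp only [Prod.mk.injEq]
    omega
  right_inv t := by
    obtain ⟨y, v, x⟩ := t
    simp only [Prod.mk.injEq]
    omega

/-- Burke property of a corner: for independent `x ~ Geom(p)`, `y ~ Geom(c)`, `v ~ Geom(p c)`,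
the pair `(v + (x - y), v + (y - x))` has the law of `(x, y)`. -/
lemma corner_burke (hp0 : 0 ≤ p) (hp1 : p < 1) (hc0 : 0 ≤ c) (hc1 : c < 1) (g : ℕ → ℕ → ℝ≥0∞) :
    ∑' y, geomMass c y * ∑' v, geomMass (p * c) v * ∑' x, geomMass p x *
        g (v + (x - y)) (v + (y - x))
      = ∑' x, geomMass p x * ∑' y, geomMass c y * g x y := by
  have lhs : ∑' y, geomMass c y * ∑' v, geomMass (p * c) v * ∑' x, geomMass p x *
        g (v + (x - y)) (v + (y - x))
      = ∑' t : ℕ × ℕ × ℕ, geomMass c t.1 * geomMass (p * c) t.2.1 * geomMass p t.2.2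
          * g (t.2.1 + (t.2.2 - t.1)) (t.2.1 + (t.1 - t.2.2)) := by
    simp_rw [ENNReal.tsum_prod', ← ENNReal.tsum_mul_left, mul_assoc]
  have term : ∀ s : ℕ × ℕ × ℕ,
      (fun t : ℕ × ℕ × ℕ => geomMass c t.1 * geomMass (p * c) t.2.1 * geomMass p t.2.2
        * g (t.2.1 + (t.2.2 - t.1)) (t.2.1 + (t.1 - t.2.2))) (cornerEquiv s)
      = geomMass c (s.2.2 + (s.2.1 - s.1)) * geomMass (p * c) (min s.1 s.2.1)
          * geomMass p (s.2.2 + (s.1 - s.2.1)) * g s.1 s.2.1 := by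
    rintro ⟨a, b, z⟩
    simp only [cornerEquiv, Equiv.coe_fn_mk]
    congr 2 <;> omega
  rw [lhs, ← cornerEquiv.tsum_eq, tsum_congr term, ENNReal.tsum_prod']
  refine tsum_congr fun a => ?_
  rw [ENNReal.tsum_prod', ← ENNReal.tsum_mul_left]
  refine tsum_congr fun b => ?_
  dsimp only
  rw [ENNReal.tsum_mul_right, tsum_geomMass_corner hp0 hp1 hc0 hc1, mul_assoc]

end Corner

section Dominance

/-- Layer-cake formula `E g(X) = g 0 + ∑ⱼ (g (j+1) - g j) P(X > j)`. -/
lemma tsum_mul_eq_add_tsum_tail {w : ℕ → ℝ≥0∞} (hw : ∑' k, w k = 1) {g : ℕ → ℝ≥0∞}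
    (hg : Monotone g) :
    ∑' k, w k * g k = g 0 + ∑' j, (g (j + 1) - g j) * ∑' k, w (k + (j + 1)) := by
  have layer : ∀ k, g k = g 0 + ∑ j ∈ Finset.range k, (g (j + 1) - g j) := by
    intro k
    induction k with
    | zero => simp
    | succ k ih =>
      rw [Finset.sum_range_succ, ← add_assoc, ← ih, add_tsub_cancel_of_le (hg k.le_succ)]
  have tail : ∀ j, ∑' k, (if j < k then w k else 0) = ∑' k, w (k + (j + 1)) := fun j => by
    have h := Summable.sum_add_tsum_nat_add' (f := fun k => if j < k then w k else 0) (k := j + 1)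
      ENNReal.summable
    rw [← h, Finset.sum_eq_zero fun i hi => if_neg (Nat.not_lt.2 (Finset.mem_range_succ_iff.1 hi)),
      zero_add]
    exact tsum_congr fun i => if_pos (by omega)
  calc ∑' k, w k * g k
      = ∑' k, (w k * g 0 + ∑' j, if j < k then w k * (g (j + 1) - g j) else 0) := by
        refine tsum_congr fun k => ?_
        rw [layer k, mul_add, Finset.mul_sum, tsum_eq_sum (s := Finset.range k)]
        · exact congrArg _ (Finset.sum_congr rfl fun j hj => (if_pos (Finset.mem_range.1 hj)).symm)
        · exact fun j hj => if_neg (by simpa using hj)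
    _ = g 0 + ∑' j, (g (j + 1) - g j) * ∑' k, w (k + (j + 1)) := by
        rw [ENNReal.tsum_add, ENNReal.tsum_mul_right, hw, one_mul, ENNReal.tsum_comm]
        congr 1
        refine tsum_congr fun j => ?_
        rw [← tail, ← ENNReal.tsum_mul_left]
        refine tsum_congr fun k => ?_
        split_ifs <;> simp [mul_comm]

lemma tsum_geomMass_mul_le {q s : ℝ} (hq0 : 0 ≤ q) (hqs : q ≤ s) (hs1 : s < 1) {g : ℕ → ℝ≥0∞}
    (hg : Monotone g) :
    ∑' k, geomMass q k * g k ≤ ∑' k, geomMass s k * g k := by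
  have hs0 : 0 ≤ s := hq0.trans hqs
  rw [tsum_mul_eq_add_tsum_tail (tsum_geomMass hq0 (hqs.trans_lt hs1)) hg,
    tsum_mul_eq_add_tsum_tail (tsum_geomMass hs0 hs1) hg]
  refine add_le_add le_rfl (ENNReal.tsum_le_tsum fun j => mul_le_mul_right ?_ _)
  rw [tsum_geomMass_add hq0 (hqs.trans_lt hs1), tsum_geomMass_add hs0 hs1]
  exact ENNReal.ofReal_le_ofReal (pow_le_pow_left₀ hq0 hqs _)

end Dominance

section SumFunctional
variable {α β : Type*}

/-- The properties of `g ↦ ∫⁻ g ∂μ` that iterated sums need. -/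
structure IsSumFunctional (T : (α → ℝ≥0∞) → ℝ≥0∞) : Prop where
  const_mul : ∀ (c : ℝ≥0∞) (g : α → ℝ≥0∞), T (fun a => c * g a) = c * T g
  tsum : ∀ g : ℕ → α → ℝ≥0∞, T (fun a => ∑' k, g k a) = ∑' k, T (g k)
  mono : Monotone T

/-- Fubini for a pair of functionals. -/
def CommutesWith (S : (α → ℝ≥0∞) → ℝ≥0∞) (T : (β → ℝ≥0∞) → ℝ≥0∞) : Prop :=
  ∀ F : α → β → ℝ≥0∞, S (fun a => T (F a)) = T (fun b => S (fun a => F a b))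

def weightedSum (w : ℕ → ℝ≥0∞) (g : ℕ → ℝ≥0∞) : ℝ≥0∞ := ∑' k, w k * g k

lemma isSumFunctional_weightedSum (w : ℕ → ℝ≥0∞) : IsSumFunctional (weightedSum w) where
  const_mul c g := by simp_rw [weightedSum, mul_left_comm (w _), ENNReal.tsum_mul_left]
  tsum g := by simp_rw [weightedSum, ← ENNReal.tsum_mul_left]; exact ENNReal.tsum_comm
  mono _ _ h := ENNReal.tsum_le_tsum fun k => mul_le_mul_right (h k) _

lemma weightedSum_const {w : ℕ → ℝ≥0∞} (hw : ∑' k, w k = 1) (x : ℝ≥0∞) :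
    weightedSum w (fun _ => x) = x := by
  rw [weightedSum, ENNReal.tsum_mul_right, hw, one_mul]

lemma IsSumFunctional.commutesWith_weightedSum {T : (β → ℝ≥0∞) → ℝ≥0∞}
    (hT : IsSumFunctional T) (w : ℕ → ℝ≥0∞) : CommutesWith (weightedSum w) T := fun F => by
  simp_rw [weightedSum, ← hT.const_mul, ← hT.tsum]

/-- `iterSum T n f` integrates `f` against `n` independent copies of `T`, the remaining
coordinates being `0`. -/
def iterSum [Zero α] (T : (α → ℝ≥0∞) → ℝ≥0∞) : ℕ → ((ℕ → α) → ℝ≥0∞) → ℝ≥0∞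
  | 0, f => f 0
  | n + 1, f => T fun a => iterSum T n fun d => f (seqCons a d)

variable [Zero α] {T : (α → ℝ≥0∞) → ℝ≥0∞}

@[simp] lemma iterSum_zero (f : (ℕ → α) → ℝ≥0∞) : iterSum T 0 f = f 0 := rfl

lemma iterSum_succ (n : ℕ) (f : (ℕ → α) → ℝ≥0∞) :
    iterSum T (n + 1) f = T fun a => iterSum T n fun d => f (seqCons a d) := rfl

lemma IsSumFunctional.iterSum (hT : IsSumFunctional T) :
    ∀ n, IsSumFunctional (GeomLPP.iterSum T n)
  | 0 => ⟨fun _ _ => rfl, fun _ => rfl, fun _ _ h => h 0⟩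
  | n + 1 =>
    have ih := hT.iterSum n
    { const_mul := fun c f => by simp only [iterSum_succ, ih.const_mul, hT.const_mul]
      tsum := fun g => by simp only [iterSum_succ, ih.tsum, hT.tsum]
      mono := fun _ _ h => hT.mono fun _ => ih.mono fun _ => h _ }

lemma iterSum_const (hT : IsSumFunctional T) (hT1 : T (fun _ => 1) = 1)
    (n : ℕ) (c : ℝ≥0∞) : iterSum T n (fun _ => c) = c := by
  induction n with
  | zero => rfl
  | succ n ih => simpa [iterSum_succ, ih, hT1] using hT.const_mul c fun _ => 1

lemma CommutesWith.iterSum {S : (β → ℝ≥0∞) → ℝ≥0∞} (h : CommutesWith T S) :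
    ∀ n, CommutesWith (GeomLPP.iterSum T n) S
  | 0 => fun _ => rfl
  | n + 1 => fun F => by simp only [iterSum_succ, (h.iterSum n) _, h _]

end SumFunctional

section PiSum

/-- Expectation over `n` i.i.d. coordinates with law `w`. -/
abbrev piSum (w : ℕ → ℝ≥0∞) (n : ℕ) : ((ℕ → ℕ) → ℝ≥0∞) → ℝ≥0∞ := iterSum (weightedSum w) n

/-- Expectation over an `m × n` array of i.i.d. entries with law `w`; `Ω j` is the `j`-th row. -/
abbrev gridSum (w : ℕ → ℝ≥0∞) (m n : ℕ) : ((ℕ → ℕ → ℕ) → ℝ≥0∞) → ℝ≥0∞ :=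
  iterSum (piSum w m) n

variable {β : Type*} {w : ℕ → ℝ≥0∞}

lemma isSumFunctional_piSum (w : ℕ → ℝ≥0∞) (n : ℕ) : IsSumFunctional (piSum w n) :=
  (isSumFunctional_weightedSum w).iterSum n

lemma isSumFunctional_gridSum (w : ℕ → ℝ≥0∞) (m n : ℕ) : IsSumFunctional (gridSum w m n) :=
  (isSumFunctional_piSum w m).iterSum n

lemma IsSumFunctional.commutesWith_piSum {T : (β → ℝ≥0∞) → ℝ≥0∞} (hT : IsSumFunctional T)
    (w : ℕ → ℝ≥0∞) (n : ℕ) : CommutesWith (piSum w n) T :=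
  (hT.commutesWith_weightedSum w).iterSum n

lemma IsSumFunctional.commutesWith_gridSum {T : (β → ℝ≥0∞) → ℝ≥0∞} (hT : IsSumFunctional T)
    (w : ℕ → ℝ≥0∞) (m n : ℕ) : CommutesWith (gridSum w m n) T :=
  (hT.commutesWith_piSum w m).iterSum n

lemma piSum_const (hw : ∑' k, w k = 1) (n : ℕ) (c : ℝ≥0∞) : piSum w n (fun _ => c) = c :=
  iterSum_const (isSumFunctional_weightedSum w) (weightedSum_const hw 1) n c

lemma piSum_pow_sum_mul {w' : ℕ → ℝ≥0∞} {t a : ℝ≥0∞} (h : ∀ k, w' k * t ^ k = a * w k)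
    (n : ℕ) (G : (ℕ → ℕ) → ℝ≥0∞) :
    piSum w' n (fun L => t ^ (∑ j ∈ Finset.range n, L j) * G L) = a ^ n * piSum w n G := by
  induction n generalizing G with
  | zero => simp
  | succ n ih =>
    simp only [iterSum_succ, sum_range_succ_seqCons, pow_add, mul_assoc,
      (isSumFunctional_piSum w' n).const_mul, ih, weightedSum, ← mul_assoc (w' _), h,
      ← ENNReal.tsum_mul_left, pow_succ]
    exact tsum_congr fun k => by ring

lemma piSum_geomMass_le {q s : ℝ} (hq0 : 0 ≤ q) (hqs : q ≤ s) (hs1 : s < 1) (n : ℕ)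
    {F : (ℕ → ℕ) → ℝ≥0∞} (hF : Monotone F) :
    piSum (geomMass q) n F ≤ piSum (geomMass s) n F := by
  induction n generalizing F with
  | zero => exact le_rfl
  | succ n ih =>
    calc piSum (geomMass q) (n + 1) F
        ≤ weightedSum (geomMass q) fun x => piSum (geomMass s) n fun d => F (seqCons x d) :=
          (isSumFunctional_weightedSum _).mono fun x =>
            ih fun d d' h => hF (seqCons_le_seqCons le_rfl h)
      _ ≤ piSum (geomMass s) (n + 1) F :=
          tsum_geomMass_mul_le hq0 hqs hs1 fun x x' h =>
            (isSumFunctional_piSum _ n).mono fun d => hF (seqCons_le_seqCons h le_rfl)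

end PiSum

section Burke

/-- Vertical increments `K i = G(i, j+1) - G(i, j)` along a row of last-passage times, from the
left boundary increment `J = K 0`, the row's weights `ω` and the horizontal increments `I` of the
row below. -/
def rowVert (J : ℕ) (ω I : ℕ → ℕ) : ℕ → ℕ
  | 0 => J
  | i + 1 => ω i + (rowVert J ω I i - I i)

/-- Horizontal increments of the new row: `G(i+1, j+1) - G(i, j+1) = ω i + (I i - K i)`. -/
def rowUpdate (J : ℕ) (ω I : ℕ → ℕ) (i : ℕ) : ℕ := ω i + (I i - rowVert J ω I i)

lemma rowVert_seqCons (J a b : ℕ) (ω I : ℕ → ℕ) (i : ℕ) :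
    rowVert J (seqCons a ω) (seqCons b I) (i + 1) = rowVert (a + (J - b)) ω I i := by
  induction i with
  | zero => rfl
  | succ i ih => simp only [rowVert] at ih ⊢; rw [ih]; rfl

lemma rowUpdate_seqCons (J a b : ℕ) (ω I : ℕ → ℕ) :
    rowUpdate J (seqCons a ω) (seqCons b I)
      = seqCons (a + (b - J)) (rowUpdate (a + (J - b)) ω I) := by
  funext i
  cases i with
  | zero => rfl
  | succ i => simp only [rowUpdate, seqCons_succ, rowVert_seqCons]

@[simp] lemma rowUpdate_zero (J : ℕ) : rowUpdate J 0 0 = 0 := by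
  funext i
  simp [rowUpdate]

variable {p c : ℝ}

/-- Burke property of a row: the new horizontal increments and the last vertical increment are
again independent with laws `Geom(p)` and `Geom(c)`. -/
lemma row_burke (hp0 : 0 ≤ p) (hp1 : p < 1) (hc0 : 0 ≤ c) (hc1 : c < 1) (m : ℕ)
    (g : (ℕ → ℕ) → ℕ → ℝ≥0∞) :
    weightedSum (geomMass c) (fun J => piSum (geomMass (p * c)) m fun ω =>
        piSum (geomMass p) m fun I => g (rowUpdate J ω I) (rowVert J ω I m))
      = piSum (geomMass p) m fun I => weightedSum (geomMass c) (g I) := by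
  induction m generalizing g with
  | zero => simp [rowVert]
  | succ m ih =>
    set H : ℕ → ℕ → ℝ≥0∞ := fun A K => piSum (geomMass (p * c)) m fun ω =>
      piSum (geomMass p) m fun I => g (seqCons A (rowUpdate K ω I)) (rowVert K ω I m)
    have step : ∀ J, (piSum (geomMass (p * c)) (m + 1) fun ω => piSum (geomMass p) (m + 1)
          fun I => g (rowUpdate J ω I) (rowVert J ω I (m + 1)))
        = weightedSum (geomMass (p * c)) fun v => weightedSum (geomMass p) fun x =>
            H (v + (x - J)) (v + (J - x)) := fun J => by
      simp only [iterSum_succ, rowUpdate_seqCons, rowVert_seqCons]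
      exact congrArg _ (funext fun v => (isSumFunctional_weightedSum _).commutesWith_piSum _ m _)
    calc _ = weightedSum (geomMass c) fun J => weightedSum (geomMass (p * c)) fun v =>
            weightedSum (geomMass p) fun x => H (v + (x - J)) (v + (J - x)) := by
          simp only [step]
      _ = weightedSum (geomMass p) fun x => weightedSum (geomMass c) (H x) :=
          corner_burke hp0 hp1 hc0 hc1 H
      _ = _ := congrArg _ (funext fun x => ih fun I K => g (seqCons x I) K)

/-- Horizontal increments of row `j`, obtained from the bottom increments `B` by `j` row
updates. -/
def topIncr : ℕ → (ℕ → ℕ) → (ℕ → ℕ → ℕ) → (ℕ → ℕ) → ℕ → ℕ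
  | 0, _, _, B => B
  | j + 1, L, Ω, B => topIncr j (L ∘ Nat.succ) (Ω ∘ Nat.succ) (rowUpdate (L 0) (Ω 0) B)

lemma topIncr_succ (j : ℕ) (L : ℕ → ℕ) (Ω : ℕ → ℕ → ℕ) (B : ℕ → ℕ) :
    topIncr (j + 1) L Ω B = rowUpdate (L j) (Ω j) (topIncr j L Ω B) := by
  induction j generalizing L Ω B with
  | zero => rfl
  | succ j ih => exact ih (L ∘ Nat.succ) (Ω ∘ Nat.succ) _

/-- Burke property of the stationary geometric model: with `Geom(c)` left boundary increments,
`Geom(p c)` bulk weights and `Geom(p)` bottom increments, the increments along the top row are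
again i.i.d. `Geom(p)`. -/
theorem burke (hp0 : 0 ≤ p) (hp1 : p < 1) (hc0 : 0 ≤ c) (hc1 : c < 1) (m n : ℕ)
    (h : (ℕ → ℕ) → ℝ≥0∞) :
    (piSum (geomMass c) n fun L => gridSum (geomMass (p * c)) m n fun Ω =>
        piSum (geomMass p) m fun B => h (topIncr n L Ω B))
      = piSum (geomMass p) m h := by
  induction n with
  | zero => rfl
  | succ n ih =>
    have hc := tsum_geomMass hc0 hc1
    calc _ = piSum (geomMass c) n fun L => gridSum (geomMass (p * c)) m n fun Ω =>
            weightedSum (geomMass c) fun J => piSum (geomMass (p * c)) m fun ω =>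
              piSum (geomMass p) m fun B => h (topIncr n L Ω (rowUpdate J ω B)) := by
          simp only [iterSum_succ,
            (isSumFunctional_piSum _ n).commutesWith_weightedSum _ _,
            (isSumFunctional_gridSum _ m n).commutesWith_piSum _ m _,
            (isSumFunctional_gridSum _ m n).commutesWith_weightedSum _ _]
          rfl
      _ = piSum (geomMass c) n fun L => gridSum (geomMass (p * c)) m n fun Ω =>
            piSum (geomMass p) m fun B => h (topIncr n L Ω B) := by
          refine congrArg _ (funext fun L => congrArg _ (funext fun Ω => ?_))
          exact (row_burke hp0 hp1 hc0 hc1 m fun B _ => h (topIncr n L Ω B)).trans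
            (by simp only [weightedSum_const hc])
      _ = piSum (geomMass p) m h := ih

end Burke

section BoundaryLPP

/-- Last-passage times `G(i, j)` of the quadrant with bottom boundary increments `B`, left
boundary increments `L` and weight `Ω j i` at the bulk site `(i + 1, j + 1)`. -/
def bdLPP (L B : ℕ → ℕ) (Ω : ℕ → ℕ → ℕ) : ℕ → ℕ → ℕ
  | i, 0 => ∑ k ∈ Finset.range i, B k
  | 0, j + 1 => ∑ k ∈ Finset.range (j + 1), L k
  | i + 1, j + 1 => Ω j i + max (bdLPP L B Ω i (j + 1)) (bdLPP L B Ω (i + 1) j)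
  termination_by i j => (j, i)

variable {L B : ℕ → ℕ} {Ω : ℕ → ℕ → ℕ}

lemma bdLPP_zero_right (i : ℕ) : bdLPP L B Ω i 0 = ∑ k ∈ Finset.range i, B k := by
  cases i <;> simp [bdLPP]

lemma bdLPP_zero_left (j : ℕ) : bdLPP L B Ω 0 j = ∑ k ∈ Finset.range j, L k := by
  cases j <;> simp [bdLPP]

lemma bdLPP_succ_succ (i j : ℕ) :
    bdLPP L B Ω (i + 1) (j + 1) = Ω j i + max (bdLPP L B Ω i (j + 1)) (bdLPP L B Ω (i + 1) j) := by
  simp [bdLPP]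

lemma bdLPP_mono {L' B' : ℕ → ℕ} (hL : L ≤ L') (hB : B ≤ B') (i j : ℕ) :
    bdLPP L B Ω i j ≤ bdLPP L' B' Ω i j := by
  induction i, j using bdLPP.induct with
  | case1 i => simp only [bdLPP_zero_right]; exact Finset.sum_le_sum fun k _ => hB k
  | case2 j => simp only [bdLPP_zero_left]; exact Finset.sum_le_sum fun k _ => hL k
  | case3 i j ih₁ ih₂ => simp only [bdLPP_succ_succ]; gcongr

lemma bdLPP_zero_le (i j : ℕ) : bdLPP L B Ω i 0 ≤ bdLPP L B Ω i j := by
  refine monotone_nat_of_le_succ (fun j => ?_) (Nat.zero_le j)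
  cases i with
  | zero => simp only [bdLPP_zero_left, Finset.sum_range_succ, le_add_iff_nonneg_right, zero_le]
  | succ i => rw [bdLPP_succ_succ]; omega

lemma bdLPP_succ_right {j : ℕ} {T : ℕ → ℕ}
    (hT : ∀ i, bdLPP L B Ω (i + 1) j = bdLPP L B Ω i j + T i) (i : ℕ) :
    bdLPP L B Ω i (j + 1) = bdLPP L B Ω i j + rowVert (L j) (Ω j) T i := by
  induction i with
  | zero => simp only [bdLPP_zero_left, Finset.sum_range_succ]; rfl
  | succ i ih => rw [bdLPP_succ_succ, ih, hT, rowVert]; omega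

lemma bdLPP_succ_left (j i : ℕ) :
    bdLPP L B Ω (i + 1) j = bdLPP L B Ω i j + topIncr j L Ω B i := by
  induction j generalizing i with
  | zero => simp only [bdLPP_zero_right, Finset.sum_range_succ]; rfl
  | succ j ih =>
    rw [bdLPP_succ_right ih, bdLPP_succ_right ih, ih, topIncr_succ, rowUpdate, rowVert]
    omega

lemma bdLPP_eq_sum (m n : ℕ) :
    bdLPP L B Ω m n = ∑ j ∈ Finset.range n, L j + ∑ i ∈ Finset.range m, topIncr n L Ω B i := by
  induction m with
  | zero => simp [bdLPP_zero_left]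
  | succ m ih => rw [bdLPP_succ_left, ih, Finset.sum_range_succ, add_assoc]

end BoundaryLPP

section CoreBound
variable {q p c lam : ℝ}

/-- Exact exponential moment in the stationary model: tilting turns the left boundary into
`Geom(c)`, and then by Burke the top row contributes like i.i.d. `Geom(p)` increments. -/
lemma stationary_mgf (hp0 : 0 ≤ p) (hc0 : 0 ≤ c) (hc1 : c < 1) (hlam : 1 ≤ lam)
    (hpl : p * lam < 1) (m n : ℕ) :
    (piSum (geomMass (c / lam)) n fun L => gridSum (geomMass (p * c)) m n fun Ω =>
        piSum (geomMass p) m fun B => ENNReal.ofReal lam ^ bdLPP L B Ω m n)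
      = ENNReal.ofReal ((1 - p) / (1 - p * lam)) ^ m
          * ENNReal.ofReal ((1 - c / lam) / (1 - c)) ^ n := by
  have hl0 : 0 < lam := zero_lt_one.trans_le hlam
  have hp1 : p < 1 := by nlinarith
  have tiltL := geomMass_mul_pow (div_nonneg hc0 hl0.le) ((div_le_self hc0 hlam).trans hc1.le)
    hl0.le (div_mul_cancel₀ c hl0.ne') hc1
  have tiltB := geomMass_mul_pow hp0 hp1.le hl0.le rfl hpl
  set t := ENNReal.ofReal lam
  calc _ = piSum (geomMass (c / lam)) n fun L => t ^ (∑ j ∈ Finset.range n, L j) *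
          gridSum (geomMass (p * c)) m n fun Ω => piSum (geomMass p) m fun B =>
            t ^ (∑ i ∈ Finset.range m, topIncr n L Ω B i) := by
        simp only [bdLPP_eq_sum, pow_add, (isSumFunctional_piSum _ m).const_mul,
          (isSumFunctional_gridSum _ m n).const_mul]
    _ = ENNReal.ofReal ((1 - c / lam) / (1 - c)) ^ n *
          piSum (geomMass p) m fun B => t ^ (∑ i ∈ Finset.range m, B i) := by
        rw [piSum_pow_sum_mul tiltL]
        exact congrArg _ (burke hp0 hp1 hc0 hc1 m n fun B => t ^ ∑ i ∈ Finset.range m, B i)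
    _ = _ := by
        have h := piSum_pow_sum_mul tiltB m fun _ => 1
        simp only [mul_one] at h
        rw [h, piSum_const (tsum_geomMass (mul_nonneg hp0 hl0.le) hpl), mul_one, mul_comm]

lemma piSum_gridSum_pow_bdLPP_le (hq0 : 0 ≤ q) (hqp : q ≤ p) (hc0 : 0 ≤ c) (hc1 : c < 1)
    (hlam : 1 ≤ lam) (hpl : p * lam < 1) (m n : ℕ) :
    (piSum (geomMass q) m fun B => gridSum (geomMass (p * c)) m n fun Ω =>
        ENNReal.ofReal lam ^ bdLPP 0 B Ω m n)
      ≤ ENNReal.ofReal ((1 - p) / (1 - p * lam)) ^ m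
          * ENNReal.ofReal ((1 - c / lam) / (1 - c)) ^ n := by
  have hl0 : 0 < lam := zero_lt_one.trans_le hlam
  have hp1 : p < 1 := by nlinarith
  have ht : Monotone fun k : ℕ => ENNReal.ofReal lam ^ k :=
    pow_right_mono₀ (ENNReal.one_le_ofReal.2 hlam)
  have hcl := tsum_geomMass (div_nonneg hc0 hl0.le) ((div_le_self hc0 hlam).trans_lt hc1)
  calc _ ≤ piSum (geomMass p) m fun B => gridSum (geomMass (p * c)) m n fun Ω =>
          ENNReal.ofReal lam ^ bdLPP 0 B Ω m n :=
        piSum_geomMass_le hq0 hqp hp1 m fun B B' h =>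
          (isSumFunctional_gridSum _ m n).mono fun Ω => ht (bdLPP_mono le_rfl h m n)
    _ ≤ piSum (geomMass p) m fun B => gridSum (geomMass (p * c)) m n fun Ω =>
          piSum (geomMass (c / lam)) n fun L => ENNReal.ofReal lam ^ bdLPP L B Ω m n :=
        (isSumFunctional_piSum _ m).mono fun B => (isSumFunctional_gridSum _ m n).mono fun Ω =>
          (piSum_const hcl n _).symm.le.trans <| (isSumFunctional_piSum _ n).mono fun L =>
            ht (bdLPP_mono (fun _ => Nat.zero_le _) le_rfl m n)
    _ = piSum (geomMass (c / lam)) n fun L => gridSum (geomMass (p * c)) m n fun Ω =>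
          piSum (geomMass p) m fun B => ENNReal.ofReal lam ^ bdLPP L B Ω m n := by
        simp only [(isSumFunctional_piSum _ n).commutesWith_gridSum _ m n _]
        rw [(isSumFunctional_piSum _ n).commutesWith_piSum _ m _]
        simp only [(isSumFunctional_gridSum _ m n).commutesWith_piSum _ m _]
    _ = _ := stationary_mgf (hq0.trans hqp) hc0 hc1 hlam hpl m n

end CoreBound

section Paths
variable {π : ℕ → Site} {ℓ : ℕ}

lemma isUpRight_monotoneOn (hπ : IsUpRight π ℓ) : MonotoneOn π (Set.Iic ℓ) := by
  refine monotoneOn_of_le_succ Set.ordConnected_Iic fun k _ _ hk => ?_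
  rw [Order.succ_eq_add_one] at hk ⊢
  rcases hπ k hk with h | h <;> simp [h, e1, e2, Prod.le_def]

lemma add_pathWeight_le {ω h : Site → ℝ} {x y : Site} {c : ℝ} (hπ : IsUpRight π ℓ)
    (h0 : π 0 = x) (hℓ : π ℓ = y) (hx : c + ω x ≤ h x)
    (hstep : ∀ v w, x ≤ v → w ≤ y → (w = v + e1 ∨ w = v + e2) → h v + ω w ≤ h w) :
    c + pathWeight ω π ℓ ≤ h y := by
  suffices ∀ k ≤ ℓ, c + pathWeight ω π k ≤ h (π k) from hℓ ▸ this ℓ le_rfl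
  intro k hk
  induction k with
  | zero => simpa [pathWeight, h0] using hx
  | succ k ih =>
    have hxk : x ≤ π k := h0 ▸ isUpRight_monotoneOn hπ (Set.mem_Iic.2 (Nat.zero_le ℓ))
      (Set.mem_Iic.2 (by omega)) (Nat.zero_le k)
    have hky : π (k + 1) ≤ y :=
      hℓ ▸ isUpRight_monotoneOn hπ (Set.mem_Iic.2 hk) (Set.mem_Iic.2 le_rfl) hk
    have := hstep _ _ hxk hky (hπ k hk)
    have hpw : pathWeight ω π (k + 1) = pathWeight ω π k + ω (π (k + 1)) :=
      Finset.sum_range_succ _ _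
    linarith [ih (by omega)]

lemma lppG_le_of_potential {ω h : Site → ℝ} {x y : Site} {c : ℝ} (hx : c + ω x ≤ h x)
    (hstep : ∀ v w, x ≤ v → w ≤ y → (w = v + e1 ∨ w = v + e2) → h v + ω w ≤ h w)
    (hy : c ≤ h y) : lppG ω x y ≤ h y - c := by
  refine Real.sSup_le ?_ (by linarith)
  rintro _ ⟨ℓ, π, hπ, h0, hℓ, rfl⟩
  linarith [add_pathWeight_le hπ h0 hℓ hx hstep]

end Paths

section ExitTime
variable {ω : Site → ℝ} {m n : ℕ} {B : ℕ → ℕ} {Ω : ℕ → ℕ → ℕ}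

lemma exists_natCast_add_one {z : ℤ} (hz : 1 ≤ z) : ∃ i : ℕ, z = i + 1 :=
  ⟨(z - 1).toNat, by omega⟩

def sitePotential (B : ℕ → ℕ) (Ω : ℕ → ℕ → ℕ) (v : Site) : ℝ :=
  bdLPP 0 B Ω v.1.toNat v.2.toNat

lemma sitePotential_step (hΩ : ∀ i < m, ∀ j < n, ω ((i : ℤ) + 1, (j : ℤ) + 1) = Ω j i)
    {v w : Site} (hv : (1, 1) ≤ v) (hw : w ≤ ((m : ℤ), (n : ℤ)))
    (hvw : w = v + e1 ∨ w = v + e2) :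
    sitePotential B Ω v + ω w ≤ sitePotential B Ω w := by
  obtain ⟨v1, v2⟩ := v
  simp only [Prod.mk_le_mk] at hv
  obtain ⟨a, rfl⟩ := exists_natCast_add_one hv.1
  obtain ⟨b, rfl⟩ := exists_natCast_add_one hv.2
  have ha : ((a : ℤ) + 1).toNat = a + 1 := by omega
  have hb : ((b : ℤ) + 1).toNat = b + 1 := by omega
  rcases hvw with rfl | rfl <;> simp only [e1, e2, Prod.mk_add_mk, Prod.mk_le_mk, add_zero] at hw ⊢
  · have hΩab := hΩ (a + 1) (by omega) b (by omega)
    have ha' : ((a : ℤ) + 1 + 1).toNat = a + 1 + 1 := by omega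
    push_cast at hΩab
    rw [hΩab, sitePotential, sitePotential, ha, hb, ha']
    exact_mod_cast (show _ ≤ _ by rw [bdLPP_succ_succ (a + 1) b]; omega)
  · have hΩab := hΩ a (by omega) (b + 1) (by omega)
    have hb' : ((b : ℤ) + 1 + 1).toNat = b + 1 + 1 := by omega
    push_cast at hΩab
    rw [hΩab, sitePotential, sitePotential, ha, hb, hb']
    exact_mod_cast (show _ ≤ _ by rw [bdLPP_succ_succ a (b + 1)]; omega)

lemma sum_Icc_one_eq_sum_range (f : ℤ → ℝ) (k : ℕ) :
    ∑ i ∈ Finset.Icc (1 : ℤ) k, f i = ∑ i ∈ Finset.range k, f ((i : ℤ) + 1) := by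
  rw [Int.Icc_eq_finset_map, Finset.sum_map]
  simp [add_comm]

theorem Gq10_le_bdLPP (hn : 1 ≤ n) (hB : ∀ i < m, ω ((i : ℤ) + 1, 0) = B i)
    (hΩ : ∀ i < m, ∀ j < n, ω ((i : ℤ) + 1, (j : ℤ) + 1) = Ω j i) :
    Gq10 ω m n ≤ bdLPP 0 B Ω m n := by
  refine Real.sSup_le ?_ (Nat.cast_nonneg _)
  rintro _ ⟨j, hj, rfl⟩
  rw [Finset.mem_Icc] at hj
  obtain ⟨a, rfl⟩ := exists_natCast_add_one hj.1
  have ham : a < m := by omega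
  have hsum : ∑ i ∈ Finset.Icc 1 ((a : ℤ) + 1), ω (i, 0) = bdLPP 0 B Ω (a + 1) 0 := by
    rw [show (a : ℤ) + 1 = ((a + 1 : ℕ) : ℤ) by push_cast; ring, sum_Icc_one_eq_sum_range,
      bdLPP_zero_right, Nat.cast_sum]
    exact Finset.sum_congr rfl fun i hi => hB i (by simp at hi; omega)
  have hstart : (bdLPP 0 B Ω (a + 1) 0 : ℝ) + ω ((a : ℤ) + 1, 1)
      ≤ sitePotential B Ω ((a : ℤ) + 1, 1) := by
    rw [show ω ((a : ℤ) + 1, 1) = Ω 0 a by simpa using hΩ a ham 0 hn, sitePotential,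
      show ((a : ℤ) + 1).toNat = a + 1 by omega, show (1 : ℤ).toNat = 0 + 1 from rfl,
      bdLPP_succ_succ]
    exact_mod_cast (show _ ≤ _ by omega)
  have hend : (bdLPP 0 B Ω (a + 1) 0 : ℝ) ≤ sitePotential B Ω (m, n) := by
    simp only [sitePotential, Int.toNat_natCast, Nat.cast_le]
    refine le_trans ?_ (bdLPP_zero_le m n)
    simp only [bdLPP_zero_right]
    exact Finset.sum_le_sum_of_subset (Finset.range_subset_range.2 ham)
  have hlpp := lppG_le_of_potential hstart (fun v w hv hw hvw =>
    sitePotential_step hΩ ((Prod.mk_le_mk.2 ⟨hj.1, le_rfl⟩).trans hv) hw hvw) hend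
  simp only [sitePotential, Int.toNat_natCast] at hlpp
  linarith

end ExitTime

section Padding
variable {α β : Type*} [Zero α]

def padZero {k : ℕ} (B : Fin k → α) (i : ℕ) : α := if h : i < k then B ⟨i, h⟩ else 0

lemma padZero_of_lt {k : ℕ} (B : Fin k → α) {i : ℕ} (h : i < k) : padZero B i = B ⟨i, h⟩ :=
  dif_pos h

lemma padZero_cons {k : ℕ} (a : α) (B : Fin k → α) :
    padZero (Fin.cons a B : Fin (k + 1) → α) = seqCons a (padZero B) := by
  funext i
  cases i with
  | zero => rfl
  | succ i =>
    by_cases h : i < k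
    · simp [padZero, h, ← Fin.succ_mk]
    · simp [padZero, h]

lemma iterSum_eq_tsum {T : (α → ℝ≥0∞) → ℝ≥0∞} (μ : β → ℝ≥0∞) (φ : β → α)
    (hT : ∀ g, T g = ∑' b, μ b * g (φ b)) (k : ℕ) (h : (ℕ → α) → ℝ≥0∞) :
    iterSum T k h = ∑' B : Fin k → β, (∏ i, μ (B i)) * h (padZero (φ ∘ B)) := by
  induction k generalizing h with
  | zero =>
    simp only [iterSum_zero, tsum_fintype, Finset.univ_unique, Finset.univ_eq_empty,
      Finset.prod_empty, one_mul, Finset.sum_singleton]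
    exact congrArg h (funext fun i => by simp [padZero])
  | succ k ih =>
    rw [iterSum_succ, hT, ← (Fin.consEquiv fun _ => β).tsum_eq, ENNReal.tsum_prod']
    refine tsum_congr fun b => ?_
    rw [ih, ← ENNReal.tsum_mul_left]
    refine tsum_congr fun B => ?_
    change _ = (∏ i, μ ((Fin.cons b B : Fin (k + 1) → β) i)) * h (padZero (φ ∘ Fin.cons b B))
    rw [Fin.prod_univ_succ, Fin.comp_cons, padZero_cons]
    simp only [Fin.cons_zero, Fin.cons_succ, Function.comp_def, mul_assoc]

lemma piSum_eq_tsum (w : ℕ → ℝ≥0∞) (m : ℕ) (g : (ℕ → ℕ) → ℝ≥0∞) :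
    piSum w m g = ∑' B : Fin m → ℕ, (∏ i, w (B i)) * g (padZero B) :=
  iterSum_eq_tsum w id (fun _ => rfl) m g

lemma gridSum_eq_tsum (w : ℕ → ℝ≥0∞) (m n : ℕ) (H : (ℕ → ℕ → ℕ) → ℝ≥0∞) :
    gridSum w m n H
      = ∑' Ω : Fin n → Fin m → ℕ, (∏ j, ∏ i, w (Ω j i)) * H (padZero (padZero ∘ Ω)) :=
  iterSum_eq_tsum _ padZero (piSum_eq_tsum w m) n H

end Padding

lemma lintegral_le_tsum_mul_measure {α ι : Type*} [MeasurableSpace α] [Countable ι]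
    {μ : Measure α} {A : ι → Set α} (hA : ∀ i, MeasurableSet (A i)) (hcover : μ (⋃ i, A i)ᶜ = 0)
    {F : α → ℝ≥0∞} {c : ι → ℝ≥0∞} (hF : ∀ i, ∀ x ∈ A i, F x ≤ c i) :
    ∫⁻ x, F x ∂μ ≤ ∑' i, c i * μ (A i) := by
  calc ∫⁻ x, F x ∂μ ≤ ∫⁻ x, ∑' i, (A i).indicator (fun _ => c i) x ∂μ := by
        refine lintegral_mono_ae ?_
        filter_upwards [mem_ae_iff.2 hcover] with x hx
        obtain ⟨i, hi⟩ := Set.mem_iUnion.1 hx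
        exact (hF i x hi).trans <| (Set.indicator_of_mem hi _).symm.le.trans <|
          ENNReal.le_tsum (f := fun i => (A i).indicator (fun _ => c i) x) i
    _ = ∑' i, c i * μ (A i) := by
        rw [lintegral_tsum fun i => (measurable_const.indicator (hA i)).aemeasurable]
        simp only [lintegral_indicator_const (hA _)]

lemma exp_log_mul_le_pow {lam x : ℝ} {N : ℕ} (hlam : 1 ≤ lam) (hx : x ≤ N) :
    Real.exp (Real.log lam * x) ≤ lam ^ N := by
  calc Real.exp (Real.log lam * x) ≤ Real.exp (N * Real.log lam) := by
        rw [mul_comm]; gcongr; exact Real.log_nonneg hlam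
    _ = lam ^ N := by rw [Real.exp_nat_mul, Real.exp_log (zero_lt_one.trans_le hlam)]

section Box
variable (m n : ℕ)

def boxSite : Fin m ⊕ Fin m × Fin n → Site
  | .inl i => ((i : ℕ) + 1, 0)
  | .inr (i, j) => ((i : ℕ) + 1, (j : ℕ) + 1)

lemma boxSite_injective : Function.Injective (boxSite m n) := by
  rintro (i | ⟨i, j⟩) (i' | ⟨i', j'⟩) h <;> simp [boxSite, Fin.ext_iff] at h ⊢ <;> omega

lemma boxSite_mem_HBdSites (u : Fin m ⊕ Fin m × Fin n) : boxSite m n u ∈ HBdSites := by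
  rcases u with i | ⟨i, j⟩ <;> simp [boxSite, HBdSites]

def boxValue (d : (Fin m → ℕ) × (Fin n → Fin m → ℕ)) : Fin m ⊕ Fin m × Fin n → ℕ
  | .inl i => d.1 i
  | .inr (i, j) => d.2 j i

def boxAtom (d : (Fin m → ℕ) × (Fin n → Fin m → ℕ)) : Set (Site → ℝ) :=
  ⋂ u, {ω | ω (boxSite m n u) = boxValue m n d u}

lemma measurableSet_boxAtom (d : (Fin m → ℕ) × (Fin n → Fin m → ℕ)) :
    MeasurableSet (boxAtom m n d) :=
  MeasurableSet.iInter fun u => measurable_pi_apply (boxSite m n u) (measurableSet_singleton _)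

variable {m n} {P : Measure (Site → ℝ)} {q r : ℝ}
  (hbulk : ∀ i j : ℤ, 1 ≤ i → 1 ≤ j → P.map (fun ω => ω (i, j)) = geomMeasure r)
  (hI : ∀ i : ℤ, 1 ≤ i → P.map (fun ω => ω (i, 0)) = geomMeasure q)
include hbulk hI

lemma map_boxSite (u : Fin m ⊕ Fin m × Fin n) :
    P.map (fun ω => ω (boxSite m n u))
      = u.elim (fun _ => geomMeasure q) (fun _ => geomMeasure r) := by
  rcases u with i | ⟨i, j⟩
  · exact hI _ (by omega)
  · exact hbulk _ _ (by omega) (by omega)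

lemma measure_boxSite_eq (u : Fin m ⊕ Fin m × Fin n) (k : ℕ) :
    P {ω | ω (boxSite m n u) = k} = u.elim (fun _ => geomMass q k) (fun _ => geomMass r k) := by
  have h := congrArg (· {(k : ℝ)}) (map_boxSite hbulk hI u)
  rw [Measure.map_apply (measurable_pi_apply _) (measurableSet_singleton _)] at h
  rcases u with i | ⟨i, j⟩ <;> exact h.trans (geomMeasure_singleton _ _)

lemma measure_boxSite_notMem_range (u : Fin m ⊕ Fin m × Fin n) :
    P {ω | ω (boxSite m n u) ∉ Set.range ((↑) : ℕ → ℝ)} = 0 := by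
  have h := congrArg (· (Set.range ((↑) : ℕ → ℝ))ᶜ) (map_boxSite hbulk hI u)
  rw [Measure.map_apply (measurable_pi_apply _) (Set.countable_range _).measurableSet.compl] at h
  rcases u with i | ⟨i, j⟩ <;> exact h.trans (geomMeasure_compl_range_natCast _)

lemma measure_compl_iUnion_boxAtom : P (⋃ d, boxAtom m n d)ᶜ = 0 := by
  refine measure_mono_null (fun ω hω => ?_)
    (measure_iUnion_null fun u => measure_boxSite_notMem_range (m := m) (n := n) hbulk hI u)
  rw [Set.mem_iUnion]
  by_contra! hne
  choose k hk using fun u => not_not.1 (hne u)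
  exact hω (Set.mem_iUnion.2 ⟨(fun i => k (.inl i), fun j i => k (.inr (i, j))),
    Set.mem_iInter.2 fun u => by rcases u with i | ⟨i, j⟩ <;> exact (hk _).symm⟩)

lemma measure_boxAtom
    (hindep : iIndepFun (m := fun _ : HBdSites => (inferInstance : MeasurableSpace ℝ))
      (fun v (ω : Site → ℝ) => ω v.val) P)
    (d : (Fin m → ℕ) × (Fin n → Fin m → ℕ)) :
    P (boxAtom m n d) = (∏ i, geomMass q (d.1 i)) * ∏ j, ∏ i, geomMass r (d.2 j i) := by
  have hinj : Function.Injective fun u =>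
      (⟨boxSite m n u, boxSite_mem_HBdSites m n u⟩ : HBdSites) := fun u u' h => boxSite_injective m n (congrArg Subtype.val h)
  refine ((hindep.precomp hinj).meas_iInter
    (s := fun u => {ω | ω (boxSite m n u) = (boxValue m n d u : ℝ)})
    fun u => ⟨{(boxValue m n d u : ℝ)}, measurableSet_singleton _, rfl⟩).trans ?_
  simp only [measure_boxSite_eq hbulk hI,
    Fintype.prod_sum_type, Sum.elim_inl, Sum.elim_inr, Fintype.prod_prod_type]
  rw [Finset.prod_comm]
  rfl

end Box

variable {m n : ℕ} {P : Measure (Site → ℝ)} {q r lam : ℝ}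

theorem lintegral_exp_Gq10_le
    (hindep : iIndepFun (m := fun _ : HBdSites => (inferInstance : MeasurableSpace ℝ))
      (fun v (ω : Site → ℝ) => ω v.val) P)
    (hbulk : ∀ i j : ℤ, 1 ≤ i → 1 ≤ j → P.map (fun ω => ω (i, j)) = geomMeasure r)
    (hI : ∀ i : ℤ, 1 ≤ i → P.map (fun ω => ω (i, 0)) = geomMeasure q)
    (hn : 1 ≤ n) (hlam : 1 ≤ lam) :
    ∫⁻ ω, ENNReal.ofReal (Real.exp (Real.log lam * Gq10 ω m n)) ∂P
      ≤ piSum (geomMass q) m fun B => gridSum (geomMass r) m n fun Ω =>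
          ENNReal.ofReal lam ^ bdLPP 0 B Ω m n := by
  have hatom : ∀ d, ∀ ω ∈ boxAtom m n d, ENNReal.ofReal (Real.exp (Real.log lam * Gq10 ω m n))
      ≤ ENNReal.ofReal lam ^ bdLPP 0 (padZero d.1) (padZero (padZero ∘ d.2)) m n := by
    intro d ω hω
    have hval := Set.mem_iInter.1 hω
    rw [← ENNReal.ofReal_pow (by linarith)]
    refine ENNReal.ofReal_le_ofReal (exp_log_mul_le_pow hlam (Gq10_le_bdLPP hn (fun i hi => ?_)
      fun i hi j hj => ?_))
    · rw [padZero_of_lt _ hi]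
      exact hval (.inl ⟨i, hi⟩)
    · rw [padZero_of_lt _ hj, Function.comp_apply, padZero_of_lt _ hi]
      exact hval (.inr (⟨i, hi⟩, ⟨j, hj⟩))
  refine (lintegral_le_tsum_mul_measure (measurableSet_boxAtom m n)
    (measure_compl_iUnion_boxAtom hbulk hI) hatom).trans_eq ?_
  simp only [measure_boxAtom hbulk hI hindep, piSum_eq_tsum, gridSum_eq_tsum, ENNReal.tsum_prod',
    ← ENNReal.tsum_mul_left]
  exact tsum_congr fun B => tsum_congr fun Ω => by ring

/-- No measurability of `f` is needed: a non-integrable `f` has Bochner integral `0`. -/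
lemma log_integral_le_of_lintegral_le {α : Type*} [MeasurableSpace α] {μ : Measure α}
    {f : α → ℝ} {L : ℝ} (hf : 0 ≤ f) (hL : 0 ≤ L)
    (h : ∫⁻ x, ENNReal.ofReal (f x) ∂μ ≤ ENNReal.ofReal (Real.exp L)) :
    Real.log (∫ x, f x ∂μ) ≤ L := by
  have hint : ∫ x, f x ∂μ ≤ Real.exp L := by
    refine (Real.le_norm_self _).trans <| (norm_integral_le_lintegral_norm _).trans <|
      ENNReal.toReal_le_of_le_ofReal (Real.exp_pos L).le ?_
    simpa only [Real.norm_eq_abs, abs_of_nonneg (hf _)] using h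
  rcases (integral_nonneg hf).eq_or_lt with h0 | hpos
  · rw [← h0, Real.log_zero]
    exact hL
  · exact (Real.log_le_iff_le_exp hpos).2 hint

theorem log_integral_exp_Gq10_le_Lfun
    (hindep : iIndepFun (m := fun _ : HBdSites => (inferInstance : MeasurableSpace ℝ))
      (fun v (ω : Site → ℝ) => ω v.val) P)
    (hbulk : ∀ i j : ℤ, 1 ≤ i → 1 ≤ j → P.map (fun ω => ω (i, j)) = geomMeasure r)
    (hI : ∀ i : ℤ, 1 ≤ i → P.map (fun ω => ω (i, 0)) = geomMeasure q)
    (hr0 : 0 < r) (hrq : r ≤ q) (hn : 1 ≤ n) (hlam : 1 ≤ lam) {s : ℝ} (hqs : q < s)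
    (hsl : lam * s < 1) :
    Real.log (∫ ω, Real.exp (Real.log lam * Gq10 ω m n) ∂P) ≤ Lfun r s (lam * s) m n := by
  have hs0 : 0 < s := (hr0.trans_le hrq).trans hqs
  have hc1 : r / s < 1 := (div_lt_one hs0).2 (hrq.trans_lt hqs)
  set A := (1 - s) / (1 - lam * s)
  set C := (1 - r / (lam * s)) / (1 - r / s)
  have hA : 1 ≤ A := (one_le_div (by linarith)).2 (by nlinarith)
  have hC : 1 ≤ C := (one_le_div (by linarith)).2 (sub_le_sub_left
    (div_le_div_of_nonneg_left hr0.le hs0 (le_mul_of_one_le_left hs0.le hlam)) 1)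
  have hexp : Real.exp (Lfun r s (lam * s) m n) = A ^ m * C ^ n := by
    rw [Lfun, Real.exp_add, Real.exp_nat_mul, Real.exp_nat_mul, Real.exp_log (by linarith),
      Real.exp_log (by linarith)]
  have hLfun : 0 ≤ Lfun r s (lam * s) m n := add_nonneg
    (mul_nonneg (Nat.cast_nonneg _) (Real.log_nonneg hA))
    (mul_nonneg (Nat.cast_nonneg _) (Real.log_nonneg hC))
  refine log_integral_le_of_lintegral_le (fun _ => (Real.exp_pos _).le) hLfun ?_
  have hcore := piSum_gridSum_pow_bdLPP_le (hr0.le.trans hrq) hqs.le (div_nonneg hr0.le hs0.le)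
    hc1 hlam (by linarith) m n
  rw [show s * (r / s) = r by field_simp, mul_comm s lam, div_div, mul_comm s lam] at hcore
  rw [hexp, ENNReal.ofReal_mul (by positivity), ENNReal.ofReal_pow (by linarith),
    ENNReal.ofReal_pow (by linarith)]
  exact (lintegral_exp_Gq10_le hindep hbulk hI hn hlam).trans hcore

end GeomLPP

theorem restricted_logMGF_bound_general
    (r q : ℝ) (hr0 : 0 < r) (hq : q ∈ Set.Ico r 1)
    (lam : ℝ) (hlam : 1 ≤ lam)
    (P : Measure (Site → ℝ))
    (hindep : iIndepFun (m := fun _ : HBdSites => (inferInstance : MeasurableSpace ℝ))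
      (fun v (ω : Site → ℝ) => ω v.val) P)
    (hbulk : ∀ i j : ℤ, 1 ≤ i → 1 ≤ j → P.map (fun ω => ω (i, j)) = geomMeasure r)
    (hI : ∀ i : ℤ, 1 ≤ i → P.map (fun ω => ω (i, 0)) = geomMeasure q)
    (m n : ℕ) (hn : 1 ≤ n) :
    (Real.log (∫ ω, Real.exp (Real.log lam * Gq10 ω (m : ℤ) (n : ℤ)) ∂P) : EReal)
      ≤ calL r q lam (m : ℝ) (n : ℝ) := by
  have hl0 : 0 < lam := zero_lt_one.trans_le hlam
  have hq0 : 0 < q := hr0.trans_le hq.1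
  unfold calL
  split_ifs with hlt
  · refine EReal.coe_le_coe_iff.2
      (le_csInf ((Set.nonempty_Ioo.2 ((lt_one_div hq0 hl0).2 hlt)).image _) ?_)
    rintro _ ⟨s, ⟨hqs, hsl⟩, rfl⟩
    exact GeomLPP.log_integral_exp_Gq10_le_Lfun hindep hbulk hI hr0 hq.1 hn hlam hqs
      (by rwa [lt_div_iff₀ hl0, mul_comm] at hsl)
  · exact le_top

/-- **Upper bound on the restricted log moment generating function.**
With i.i.d. Geom(r) bulk weights and independent i.i.d. Geom(q) horizontal boundary
weights, for `q ∈ [r,1)` and `λ ≥ 1`,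
`log E[exp{log(λ) G^q(m,n|1,0)}] ≤ 𝓛^{λ,q}(m,n)`. -/
theorem restricted_logMGF_bound
    (r q : ℝ) (hr0 : 0 < r) (hr1 : r < 1) (hq : q ∈ Set.Ico r 1)
    (lam : ℝ) (hlam : 1 ≤ lam)
    (P : Measure (Site → ℝ)) [IsProbabilityMeasure P]
    (hindep : iIndepFun (m := fun _ : HBdSites => (inferInstance : MeasurableSpace ℝ))
      (fun v (ω : Site → ℝ) => ω v.val) P)
    (hbulk : ∀ i j : ℤ, 1 ≤ i → 1 ≤ j → P.map (fun ω => ω (i, j)) = geomMeasure r)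
    (hI : ∀ i : ℤ, 1 ≤ i → P.map (fun ω => ω (i, 0)) = geomMeasure q)
    (m n : ℕ) (hm : 1 ≤ m) (hn : 1 ≤ n) :
    (Real.log (∫ ω, Real.exp (Real.log lam * Gq10 ω (m : ℤ) (n : ℤ)) ∂P) : EReal)
      ≤ calL r q lam (m : ℝ) (n : ℝ) :=
  restricted_logMGF_bound_general r q hr0 hq lam hlam P hindep hbulk hI m n hn

end
end

section
/- Fix 0 < r < 1 and δ ∈ (0,1). For every x ∈ S_δ, r + (1−r)δ√(rδ)/(1+√r)² ≤ p̄(x) ≤ 1 − (1−√r)δ/(1+√r). -/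
noncomputable section

/-- The cone `S_δ = {x ∈ ℝ²_{>0} : x₁ ≥ δx₂, x₂ ≥ δx₁}`. -/
def Scone (δ : ℝ) : Set (ℝ × ℝ) :=
  {x | 0 < x.1 ∧ 0 < x.2 ∧ δ * x.2 ≤ x.1 ∧ δ * x.1 ≤ x.2}

/-! With `s = √r` and `t = √(x₂ / x₁)` one has `p̄(x) = s (s + t) / (1 + s t)`, a Möbius function
of `t` with derivative `s (1 - s²) / (1 + s t)² ≥ 0`. On `S_δ` the ratio `t` lies in `[√δ, 1 / √δ]`,
so `p̄` is squeezed between its values at these endpoints, and those compare with the stated bounds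
by elementary inequalities in `s` and `√δ`. -/

def pbarOfRatio (s t : ℝ) : ℝ :=
  s * (s + t) / (1 + s * t)

/-- With `s = √r` and `t = √(b / a)`, numerator and denominator of `pbar` factor as
`s (s√a + √b)(√a + s√b)` and `(√a + s√b)²`. -/
theorem pbar_eq_pbarOfRatio {r a b : ℝ} (hr : 0 ≤ r) (ha : 0 < a) (hb : 0 ≤ b) :
    pbar r a b = pbarOfRatio (Real.sqrt r) (Real.sqrt (b / a)) := by
  obtain ⟨s, hs, rfl⟩ : ∃ s, 0 ≤ s ∧ s ^ 2 = r := ⟨_, Real.sqrt_nonneg r, Real.sq_sqrt hr⟩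
  obtain ⟨u, hu, rfl⟩ : ∃ u, 0 < u ∧ u ^ 2 = a :=
    ⟨_, Real.sqrt_pos.mpr ha, Real.sq_sqrt ha.le⟩
  obtain ⟨v, hv, rfl⟩ : ∃ v, 0 ≤ v ∧ v ^ 2 = b := ⟨_, Real.sqrt_nonneg b, Real.sq_sqrt hb⟩
  have hsuv : Real.sqrt (s ^ 2 * u ^ 2 * v ^ 2) = s * u * v := by
    rw [← mul_pow, ← mul_pow, Real.sqrt_sq (by positivity)]
  rw [pbar, pbarOfRatio, hsuv, ← div_pow, Real.sqrt_sq hs, Real.sqrt_sq (by positivity)]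
  have hden : 0 < u + s * v := by positivity
  field_simp
  ring

theorem monotoneOn_pbarOfRatio {s : ℝ} (hs0 : 0 ≤ s) (hs1 : s ≤ 1) :
    MonotoneOn (pbarOfRatio s) (Set.Ici 0) := by
  intro t (ht : 0 ≤ t) t' (ht' : 0 ≤ t') htt'
  rw [pbarOfRatio, pbarOfRatio, div_le_div_iff₀ (by positivity) (by positivity)]
  have key : s * (s + t') * (1 + s * t) - s * (s + t) * (1 + s * t') =
      s * (1 - s ^ 2) * (t' - t) := by ring
  nlinarith [mul_nonneg (mul_nonneg hs0 (by nlinarith : 0 ≤ 1 - s ^ 2)) (sub_nonneg.mpr htt')]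

theorem div_mem_Icc_of_mem_Scone {δ : ℝ} (hδ : 0 < δ) {x : ℝ × ℝ} (hx : x ∈ Scone δ) :
    x.2 / x.1 ∈ Set.Icc δ δ⁻¹ := by
  obtain ⟨h1, -, h21, h12⟩ := hx
  constructor
  · rwa [le_div_iff₀ h1]
  · rwa [div_le_iff₀ h1, ← div_eq_inv_mul, le_div_iff₀ hδ, mul_comm]

theorem pbarOfRatio_lower_bound {s d : ℝ} (hs0 : 0 ≤ s) (hs1 : s ≤ 1) (hd0 : 0 ≤ d)
    (hd1 : d ≤ 1) :
    s ^ 2 + (1 - s ^ 2) * d ^ 2 * (s * d) / (1 + s) ^ 2 ≤ pbarOfRatio s d := by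
  have h1s : 0 < 1 + s * d := by positivity
  have hratio : d ^ 2 / (1 + s) ^ 2 ≤ 1 / (1 + s * d) := by
    rw [div_le_div_iff₀ (by positivity) h1s]
    nlinarith [mul_le_mul hd1 hd1 hd0 zero_le_one, mul_le_of_le_one_right hs0 hd1]
  calc s ^ 2 + (1 - s ^ 2) * d ^ 2 * (s * d) / (1 + s) ^ 2
      = s ^ 2 + (1 - s ^ 2) * (s * d) * (d ^ 2 / (1 + s) ^ 2) := by ring
    _ ≤ s ^ 2 + (1 - s ^ 2) * (s * d) * (1 / (1 + s * d)) := by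
        have : 0 ≤ 1 - s ^ 2 := by nlinarith
        gcongr
    _ = pbarOfRatio s d := by
        rw [pbarOfRatio]
        field_simp
        ring

theorem pbarOfRatio_inv_upper_bound {s d : ℝ} (hs0 : 0 ≤ s) (hs1 : s ≤ 1) (hd0 : 0 < d)
    (hd1 : d ≤ 1) :
    pbarOfRatio s d⁻¹ ≤ 1 - (1 - s) * d ^ 2 / (1 + s) := by
  have hds : 0 < d + s := by positivity
  have hratio : d / (1 + s) ≤ (1 + s) / (d + s) := by
    rw [div_le_div_iff₀ (by positivity) hds]
    nlinarith
  calc pbarOfRatio s d⁻¹ = 1 - (1 - s) * d * ((1 + s) / (d + s)) := by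
        rw [pbarOfRatio]
        field_simp
        ring
    _ ≤ 1 - (1 - s) * d * (d / (1 + s)) := by
        gcongr
    _ = 1 - (1 - s) * d ^ 2 / (1 + s) := by ring

/-- **Bounds on `p̄` on the cone `S_δ`.** For `0 < r < 1`, `δ ∈ (0,1)`, and `x ∈ S_δ`,
`r + (1−r)δ√(rδ)/(1+√r)² ≤ p̄(x) ≤ 1 − (1−√r)δ/(1+√r)`. -/
theorem pbar_bounds (r δ : ℝ) (hr0 : 0 < r) (hr1 : r < 1)
    (hδ0 : 0 < δ) (hδ1 : δ < 1)
    (x : ℝ × ℝ) (hx : x ∈ Scone δ) :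
    r + (1 - r) * δ * Real.sqrt (r * δ) / (1 + Real.sqrt r) ^ 2 ≤ pbar r x.1 x.2 ∧
      pbar r x.1 x.2 ≤ 1 - (1 - Real.sqrt r) * δ / (1 + Real.sqrt r) := by
  obtain ⟨s, hs0, rfl⟩ : ∃ s, 0 ≤ s ∧ s ^ 2 = r := ⟨_, Real.sqrt_nonneg r, Real.sq_sqrt hr0.le⟩
  obtain ⟨d, hd, rfl⟩ : ∃ d, 0 < d ∧ d ^ 2 = δ := ⟨_, Real.sqrt_pos.mpr hδ0, Real.sq_sqrt hδ0.le⟩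
  have hd0 := hd.le
  have hs1 : s ≤ 1 := by nlinarith
  have hd1 : d ≤ 1 := by nlinarith
  obtain ⟨hlow, hupp⟩ := div_mem_Icc_of_mem_Scone hδ0 hx
  have ht : d ≤ Real.sqrt (x.2 / x.1) ∧ Real.sqrt (x.2 / x.1) ≤ d⁻¹ := by
    constructor
    · simpa [Real.sqrt_sq hd0] using Real.sqrt_le_sqrt hlow
    · simpa [Real.sqrt_inv, Real.sqrt_sq hd0] using Real.sqrt_le_sqrt hupp
  rw [pbar_eq_pbarOfRatio (sq_nonneg s) hx.1 hx.2.1.le, ← mul_pow, Real.sqrt_sq hs0,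
    Real.sqrt_sq (mul_nonneg hs0 hd0)]
  have hmono := monotoneOn_pbarOfRatio hs0 hs1
  constructor
  · calc _ ≤ pbarOfRatio s d := pbarOfRatio_lower_bound hs0 hs1 hd0 hd1
      _ ≤ _ := hmono hd0 (hd0.trans ht.1) ht.1
  · calc _ ≤ pbarOfRatio s d⁻¹ := hmono (Real.sqrt_nonneg _) (inv_nonneg.mpr hd0) ht.2
      _ ≤ _ := pbarOfRatio_inv_upper_bound hs0 hs1 hd hd1

end
end
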